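/- arXiv:1004.2939 — 5 statements merged into one kernel-verified Lean document; each statement's English description precedes it below -/
import Mathlib

section
/- Let d ≥ 1 be an integer, a ≥ 0 and C ≥ 0 real, ρ₀ ≥ 2 real, and set ρ_n := 2^n ρ₀ for n ∈ ℕ. Let M be a positive integer with M ≥ 12(a + 1). Let f : ℝ → ℝ and c ∈ ℝ. Assume that for every n ∈ ℕ there exist real numbers e_{j,p}(n), for integers −d+1 ≤ j ≤ 6M and 0 ≤ p ≤ d−1, such that |e_{j,p}(n)| ≤ C·ρ_n^{2j/3 + a} for all j, p, and such that |f(ρ) − c·ρ^d − Σ_{p=0}^{d−1} Σ_{j=−d+1}^{6M} e_{j,p}(n)·ρ^{−j}·(ln ρ)^p| ≤ C·ρ_n^{−M} for every ρ ∈ [ρ_n, 4ρ_n]. Then there exist real numbers e_{j,p} (for −d+1 ≤ j ≤ ⌊M/6⌋, 0 ≤ p ≤ d−1) and a constant C' ≥ 0 such that for all ρ ≥ ρ₀: |f(ρ) − c·ρ^d − Σ_{p=0}^{d−1} Σ_{j=−d+1}^{⌊M/6⌋} e_{j,p}·ρ^{−j}·(ln ρ)^p| ≤ C'·ρ^{−M/6}.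 -/
/-!
On the overlap `[2ρₙ, 4ρₙ]` of two consecutive dyadic intervals, the two local expansions differ
by `O(ρₙ^(-M))`. The functions `ρ^(-j) (log ρ)^p` are linearly independent, so on an interval
`[R, 2R]` a small combination of them has small coefficients; after rescaling `ρ = R t` this costs
a factor `R^j` times a power of `log R`, which is `O(R^(1/12))`. Hence
`e_{j,p}(n) - e_{j,p}(n+1) = O(ρₙ^(j - M + 1/12))`, which is geometric in `n` for `j < M`: these
coefficients converge, with the same rate. On `[ρₙ, 2ρₙ]` the expansion with the limit
coefficients truncated at `j ≤ M/6` then differs from the `n`-th local one by `O(ρ^(-M/6))`: the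
terms with `j < M` are controlled by the convergence rate, and those with `j ≥ M` by the a priori
bound `ρₙ^(2j/3 + a)` on the coefficients.
-/

open Real Filter Asymptotics

theorem Asymptotics.eq_zero_of_sum_eventuallyEq_zero_of_isLittleO {α ι β : Type*} [LinearOrder β]
    {l : Filter α} [l.NeBot] {s : Finset ι} {f : ι → α → ℝ} {c : ι → ℝ} (key : ι → β)
    (hkey : Set.InjOn key s) (hf : ∀ i ∈ s, ∀ᶠ x in l, f i x ≠ 0)
    (hlt : ∀ i ∈ s, ∀ k ∈ s, key i < key k → f i =o[l] f k)
    (hc : (fun x => ∑ i ∈ s, c i * f i x) =ᶠ[l] 0) : ∀ i ∈ s, c i = 0 := by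
  classical
  by_contra! hne
  obtain ⟨i₀, hi₀, hmax⟩ := (s.filter (c · ≠ 0)).exists_max_image key <| by
    obtain ⟨i, hi, hci⟩ := hne
    exact ⟨i, Finset.mem_filter.2 ⟨hi, hci⟩⟩
  rw [Finset.mem_filter] at hi₀
  -- every other term is dominated by the one with the largest key
  have hrest : (fun x => ∑ i ∈ s.erase i₀, c i * f i x) =o[l] f i₀ := by
    refine IsLittleO.fun_sum fun i hi => ?_
    obtain ⟨hne, hi⟩ := Finset.mem_erase.1 hi
    by_cases hci : c i = 0
    · simp [hci]
    · have hlt' : key i < key i₀ :=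
        (hmax i (Finset.mem_filter.2 ⟨hi, hci⟩)).lt_of_ne (hkey.ne hi hi₀.1 hne)
      exact (hlt i hi i₀ hi₀.1 hlt').const_mul_left (c i)
  have hself : (fun x => c i₀ * f i₀ x) =o[l] f i₀ := by
    refine ((isLittleO_zero (f i₀) l).congr' hc.symm EventuallyEq.rfl |>.sub hrest).congr_left
      fun x => ?_
    rw [← Finset.add_sum_erase s _ hi₀.1]
    ring
  refine isLittleO_irrefl (hf i₀ hi₀.1).frequently ((hself.const_mul_left (c i₀)⁻¹).congr_left
    fun x => ?_)
  rw [inv_mul_cancel_left₀ hi₀.2]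

theorem isLittleO_zpow_mul_log_pow {j j' : ℤ} {q q' : ℕ} (h : j' < j ∨ j = j' ∧ q < q') :
    (fun t : ℝ => t ^ (-j) * log t ^ q) =o[atTop] fun t => t ^ (-j') * log t ^ q' := by
  rcases h with hj | ⟨rfl, hq⟩
  · have hlog : (fun t : ℝ => log t ^ q) =o[atTop] fun t => t := isLittleO_pow_log_id_atTop
    have hpow : (fun t : ℝ => t ^ (-j) * t) =O[atTop] fun t => t ^ (-j') * log t ^ q' := by
      refine IsBigO.of_bound 1 ?_
      filter_upwards [eventually_ge_atTop (exp 1)] with t ht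
      have ht1 : 1 ≤ t := (one_le_exp zero_le_one).trans ht
      have ht0 : 0 < t := zero_lt_one.trans_le ht1
      have hlog1 : 1 ≤ log t := by rwa [le_log_iff_exp_le ht0]
      rw [one_mul, norm_mul, norm_mul, Real.norm_of_nonneg (zpow_pos ht0 _).le,
        Real.norm_of_nonneg ht0.le, Real.norm_of_nonneg (zpow_pos ht0 _).le,
        Real.norm_of_nonneg (pow_nonneg (zero_le_one.trans hlog1) _)]
      calc t ^ (-j) * t = t ^ (-j + 1) := by rw [zpow_add_one₀ ht0.ne']
        _ ≤ t ^ (-j') := zpow_le_zpow_right₀ ht1 (by omega)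
        _ ≤ t ^ (-j') * log t ^ q' := le_mul_of_one_le_right (zpow_pos ht0 _).le (one_le_pow₀ hlog1)
    exact ((isBigO_refl (fun t : ℝ => t ^ (-j)) atTop).mul_isLittleO hlog).trans_isBigO hpow
  · exact (isBigO_refl _ _).mul_isLittleO ((isLittleO_pow_pow_atTop_of_lt hq).comp_tendsto
      tendsto_log_atTop)

theorem eq_zero_of_sum_zpow_mul_log_pow_eq_zero {S : Finset (ℤ × ℕ)} {c : ℤ × ℕ → ℝ}
    (h : ∀ t ∈ Set.Icc (1 : ℝ) 2, ∑ x ∈ S, c x * (t ^ (-x.1) * log t ^ x.2) = 0) :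
    ∀ x ∈ S, c x = 0 := by
  have hF : AnalyticOnNhd ℝ (fun t => ∑ x ∈ S, c x * (t ^ (-x.1) * log t ^ x.2)) (Set.Ioi 0) :=
    fun t ht => Finset.analyticAt_fun_sum _ fun x _ => analyticAt_const.mul
      ((analyticAt_id.zpow (ne_of_gt ht)).mul ((analyticAt_log ht).pow _))
  -- the sum vanishes near `3/2`, hence on all of `(0, ∞)` by analytic continuation
  have hzero := hF.eqOn_zero_of_preconnected_of_eventuallyEq_zero isPreconnected_Ioi
    (z₀ := 3 / 2) (by norm_num) (Filter.eventually_of_mem (Icc_mem_nhds (by norm_num)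
      (by norm_num)) fun t ht => h t ht)
  refine Asymptotics.eq_zero_of_sum_eventuallyEq_zero_of_isLittleO (l := atTop)
    (fun x : ℤ × ℕ => toLex (-x.1, x.2)) (fun x _ y _ hxy => ?_) (fun x _ => ?_)
    (fun x _ y _ hxy => isLittleO_zpow_mul_log_pow ?_)
    (Filter.eventually_of_mem (Ioi_mem_atTop 0) hzero)
  · simpa [Prod.ext_iff] using hxy
  · filter_upwards [eventually_gt_atTop 1] with t ht
    exact mul_ne_zero (zpow_ne_zero _ (by linarith)) (pow_ne_zero _ (log_pos ht).ne')
  · rw [Prod.Lex.toLex_lt_toLex] at hxy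
    omega

theorem LinearIndepOn.exists_abs_le_mul_norm_sum {ι F : Type*} [NormedAddCommGroup F]
    [NormedSpace ℝ F] {g : ι → F} {s : Finset ι} (hg : LinearIndepOn ℝ g (s : Set ι)) :
    ∃ K, 0 ≤ K ∧ ∀ (c : ι → ℝ), ∀ i ∈ s, |c i| ≤ K * ‖∑ i ∈ s, c i • g i‖ := by
  let T := Fintype.linearCombination ℝ fun i : s => g i
  obtain ⟨K, -, hK⟩ := T.exists_antilipschitzWith
    (LinearMap.ker_eq_bot.2 hg.fintypeLinearCombination_injective)
  refine ⟨K, K.2, fun c i hi => ?_⟩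
  calc |c i| = ‖(fun k : s => c k) ⟨i, hi⟩‖ := rfl
    _ ≤ ‖fun k : s => c k‖ := norm_le_pi_norm (fun k : s => c k) _
    _ ≤ K * ‖T fun k : s => c k‖ := ZeroHomClass.bound_of_antilipschitz T hK _
    _ = K * ‖∑ i ∈ s, c i • g i‖ := by
      rw [Fintype.linearCombination_apply, Finset.sum_coe_sort s fun i => c i • g i]

theorem exists_one_add_log_pow_le (d : ℕ) {ε : ℝ} (hε : 0 < ε) :
    ∃ K, 0 ≤ K ∧ ∀ x : ℝ, 1 ≤ x → (1 + log x) ^ d ≤ K * x ^ ε := by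
  set δ := ε / (d + 1)
  have hδ : 0 < δ := by positivity
  refine ⟨(1 + 1 / δ) ^ d, by positivity, fun x hx => ?_⟩
  have hxδ : 1 ≤ x ^ δ := one_le_rpow hx hδ.le
  have hlog : 1 + log x ≤ (1 + 1 / δ) * x ^ δ := by
    have := log_le_rpow_div (zero_le_one.trans hx) hδ
    rw [div_eq_mul_one_div] at this
    nlinarith
  calc (1 + log x) ^ d ≤ ((1 + 1 / δ) * x ^ δ) ^ d :=
        pow_le_pow_left₀ (by linarith [log_nonneg hx]) hlog d
    _ = (1 + 1 / δ) ^ d * x ^ (δ * d) := by rw [mul_pow, rpow_mul_natCast (by linarith)]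
    _ ≤ (1 + 1 / δ) ^ d * x ^ ε := by
        gcongr
        rw [div_mul_eq_mul_div, div_le_iff₀ (by positivity)]
        nlinarith

noncomputable def logPowerSum (d : ℕ) (J : Finset ℤ) (b : ℤ → ℕ → ℝ) (ρ : ℝ) : ℝ :=
  ∑ p ∈ Finset.range d, ∑ j ∈ J, b j p * ρ ^ (-j) * log ρ ^ p

theorem logPowerSum_eq_sum_product (d : ℕ) (J : Finset ℤ) (b : ℤ → ℕ → ℝ) (ρ : ℝ) :
    logPowerSum d J b ρ = ∑ x ∈ J ×ˢ Finset.range d, b x.1 x.2 * (ρ ^ (-x.1) * log ρ ^ x.2) := by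
  simp only [logPowerSum, Finset.sum_product, mul_assoc]
  exact Finset.sum_comm

theorem logPowerSum_sub (d : ℕ) (J : Finset ℤ) (b b' : ℤ → ℕ → ℝ) (ρ : ℝ) :
    logPowerSum d J (b - b') ρ = logPowerSum d J b ρ - logPowerSum d J b' ρ := by
  simp only [logPowerSum, ← Finset.sum_sub_distrib, Pi.sub_apply, sub_mul]

theorem logPowerSum_sdiff_add {J' J : Finset ℤ} (h : J' ⊆ J) (d : ℕ) (b : ℤ → ℕ → ℝ) (ρ : ℝ) :
    logPowerSum d (J \ J') b ρ + logPowerSum d J' b ρ = logPowerSum d J b ρ := by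
  simp only [logPowerSum, ← Finset.sum_add_distrib, Finset.sum_sdiff h]

theorem exists_abs_coeff_le_of_abs_logPowerSum_le_Icc_one_two (d : ℕ) (J : Finset ℤ) :
    ∃ K, 0 ≤ K ∧ ∀ (c : ℤ → ℕ → ℝ) (B : ℝ),
      (∀ t ∈ Set.Icc (1 : ℝ) 2, |logPowerSum d J c t| ≤ B) →
      ∀ j ∈ J, ∀ q ∈ Finset.range d, |c j q| ≤ K * B := by
  let g (x : ℤ × ℕ) : C(Set.Icc (1 : ℝ) 2, ℝ) :=
    ⟨fun t => (t : ℝ) ^ (-x.1) * log t ^ x.2,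
      ((continuous_subtype_val.zpow₀ _ fun t => .inl (by linarith [t.2.1])).mul
        ((continuous_subtype_val.log fun t => by linarith [t.2.1]).pow _))⟩
  have hg : LinearIndepOn ℝ g ↑(J ×ˢ Finset.range d) :=
    linearIndepOn_finset_iff.2 fun c hc => eq_zero_of_sum_zpow_mul_log_pow_eq_zero
      fun t ht => by simpa [g] using congr($hc ⟨t, ht⟩)
  obtain ⟨K, hK, hKg⟩ := hg.exists_abs_le_mul_norm_sum
  refine ⟨K, hK, fun c B hB j hj q hq => ?_⟩
  have : Nonempty (Set.Icc (1 : ℝ) 2) := ⟨⟨1, by norm_num, by norm_num⟩⟩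
  refine (hKg (fun x => c x.1 x.2) (j, q) (Finset.mem_product.2 ⟨hj, hq⟩)).trans
    (mul_le_mul_of_nonneg_left ((ContinuousMap.norm_le_of_nonempty _).2 fun t => ?_) hK)
  simpa [g, logPowerSum_eq_sum_product] using hB t t.2

section Taylor

open Polynomial

theorem Polynomial.sum_range_monomial_coeff {R : Type*} [Semiring R] {Q : R[X]} {d : ℕ}
    (hQ : Q.degree < d) :
    ∑ i ∈ Finset.range d, monomial i (Q.coeff i) = Q := by
  rw [← Fin.sum_univ_eq_sum_range (fun i => monomial i (Q.coeff i)),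
    sum_fin (fun i a => monomial i a) (by simp) hQ, sum_monomial_eq]

theorem Polynomial.eval_eq_sum_range_of_degree_lt {R : Type*} [Semiring R] {Q : R[X]} {d : ℕ}
    (hQ : Q.degree < d) (x : R) :
    Q.eval x = ∑ i ∈ Finset.range d, Q.coeff i * x ^ i := by
  conv_lhs => rw [← sum_range_monomial_coeff hQ]
  simp [eval_finsetSum]

theorem Polynomial.coeff_taylor_of_degree_lt {R : Type*} [CommSemiring R] {Q : R[X]} {d : ℕ}
    (hQ : Q.degree < d) (r : R) (n : ℕ) :
    (taylor r Q).coeff n = ∑ i ∈ Finset.range d, Q.coeff i * (r ^ (i - n) * i.choose n) := by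
  conv_lhs => rw [← sum_range_monomial_coeff hQ]
  simp [map_sum, taylor_monomial, coeff_X_add_C_pow]

theorem Polynomial.abs_coeff_taylor_le {Q : ℝ[X]} {d : ℕ} (hQ : Q.degree < d) {A : ℝ}
    (hA : ∀ i ∈ Finset.range d, |Q.coeff i| ≤ A) (r : ℝ) (n : ℕ) :
    |(taylor r Q).coeff n| ≤ d * A * (2 * (1 + |r|)) ^ d := by
  rw [coeff_taylor_of_degree_lt hQ]
  refine (Finset.abs_sum_le_sum_abs _ _).trans ?_
  calc _ ≤ ∑ _i ∈ Finset.range d, A * (2 * (1 + |r|)) ^ d := Finset.sum_le_sum fun i hi => ?_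
    _ = d * A * (2 * (1 + |r|)) ^ d := by simp [mul_assoc]
  have hid : i ≤ d := (Finset.mem_range.1 hi).le
  rw [abs_mul, abs_mul, abs_pow, Nat.abs_cast, mul_pow, mul_comm (2 ^ d)]
  gcongr
  · exact (abs_nonneg _).trans (hA i hi)
  · exact hA i hi
  · calc |r| ^ (i - n) ≤ (1 + |r|) ^ (i - n) := by gcongr; linarith
      _ ≤ (1 + |r|) ^ d := pow_le_pow_right₀ (by linarith [abs_nonneg r]) (by omega)
  · exact_mod_cast (Nat.choose_le_two_pow i n).trans (Nat.pow_le_pow_right two_pos hid)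

theorem Polynomial.degree_sum_range_monomial_lt {R : Type*} [Semiring R] (d : ℕ) (a : ℕ → R) :
    (∑ p ∈ Finset.range d, monomial p (a p)).degree < d :=
  mem_degreeLT.1 <| Submodule.sum_mem _ fun p hp =>
    mem_degreeLT.2 <| (degree_monomial_le _ _).trans_lt <| by exact_mod_cast Finset.mem_range.1 hp

theorem Polynomial.coeff_sum_range_monomial {R : Type*} [Semiring R] {d p : ℕ} (a : ℕ → R)
    (hp : p ∈ Finset.range d) :
    (∑ q ∈ Finset.range d, monomial q (a q)).coeff p = a p := by
  simp [finsetSum_coeff, coeff_monomial, hp]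

theorem logPowerSum_mul {R t : ℝ} (hR : R ≠ 0) (ht : t ≠ 0) (d : ℕ) (J : Finset ℤ)
    (b : ℤ → ℕ → ℝ) :
    logPowerSum d J b (R * t) = logPowerSum d J (fun j q => R ^ (-j) *
      (taylor (log R) (∑ p ∈ Finset.range d, monomial p (b j p))).coeff q) t := by
  unfold logPowerSum
  rw [Finset.sum_comm, Finset.sum_comm (s := Finset.range d)]
  refine Finset.sum_congr rfl fun j _ => ?_
  set P := ∑ p ∈ Finset.range d, monomial p (b j p)
  have hQ : (taylor (log R) P).degree < d := by
    rw [degree_taylor]; exact degree_sum_range_monomial_lt d (b j)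
  have heval := eval_eq_sum_range_of_degree_lt hQ (log t)
  rw [taylor_eval, eval_finsetSum] at heval
  simp only [eval_monomial] at heval
  rw [log_mul hR ht, mul_zpow]
  calc ∑ p ∈ Finset.range d, b j p * (R ^ (-j) * t ^ (-j)) * (log R + log t) ^ p
      = R ^ (-j) * t ^ (-j) * ∑ p ∈ Finset.range d, b j p * (log t + log R) ^ p := by
        rw [Finset.mul_sum]; exact Finset.sum_congr rfl fun p _ => by ring
    _ = _ := by
        rw [heval, Finset.mul_sum]; exact Finset.sum_congr rfl fun p _ => by ring

theorem exists_abs_coeff_le_of_abs_logPowerSum_le (d : ℕ) (J : Finset ℤ) {ε : ℝ} (hε : 0 < ε) :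
    ∃ K, ∀ (b : ℤ → ℕ → ℝ) (B R : ℝ), 1 ≤ R →
      (∀ ρ ∈ Set.Icc R (2 * R), |logPowerSum d J b ρ| ≤ B) →
      ∀ j ∈ J, ∀ p ∈ Finset.range d, |b j p| ≤ K * B * R ^ ((j : ℝ) + ε) := by
  obtain ⟨K₀, hK₀, hcoeff⟩ := exists_abs_coeff_le_of_abs_logPowerSum_le_Icc_one_two d J
  obtain ⟨K₁, hK₁, hlog⟩ := exists_one_add_log_pow_le d hε
  refine ⟨d * K₀ * 2 ^ d * K₁, fun b B R hR hb j hj p hp => ?_⟩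
  have hR0 : 0 < R := zero_lt_one.trans_le hR
  have hB : 0 ≤ B := (abs_nonneg _).trans (hb R ⟨le_rfl, by linarith⟩)
  set P := ∑ p ∈ Finset.range d, monomial p (b j p)
  have hQ : ∀ q ∈ Finset.range d, |(taylor (log R) P).coeff q| ≤ K₀ * B * R ^ j := by
    intro q hq
    have := hcoeff _ B (fun t ht => by
      rw [← logPowerSum_mul hR0.ne' (by linarith [ht.1])]
      exact hb _ ⟨by nlinarith [ht.1], by nlinarith [ht.2]⟩) j hj q hq
    rwa [abs_mul, abs_of_pos (zpow_pos hR0 _), zpow_neg, inv_mul_le_iff₀ (zpow_pos hR0 _),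
      mul_comm] at this
  have hP : b j p = (taylor (-log R) (taylor (log R) P)).coeff p := by
    rw [taylor_taylor, neg_add_cancel, taylor_zero, coeff_sum_range_monomial _ hp]
  calc |b j p| ≤ d * (K₀ * B * R ^ j) * (2 * (1 + |-log R|)) ^ d := by
        rw [hP]
        exact abs_coeff_taylor_le
          (by rw [degree_taylor]; exact degree_sum_range_monomial_lt ..) hQ ..
    _ = d * K₀ * 2 ^ d * B * R ^ j * (1 + log R) ^ d := by
        rw [abs_neg, abs_of_nonneg (log_nonneg hR), mul_pow]; ring
    _ ≤ d * K₀ * 2 ^ d * B * R ^ j * (K₁ * R ^ ε) := by gcongr; exact hlog R hR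
    _ = d * K₀ * 2 ^ d * K₁ * B * R ^ ((j : ℝ) + ε) := by
        rw [rpow_add hR0, rpow_intCast]; ring

end Taylor

theorem exists_abs_sub_le_of_abs_sub_succ_le {u : ℕ → ℝ} {ρ₀ K w : ℝ} (hρ₀ : 0 < ρ₀)
    (hw : w < 0) (h : ∀ n, |u n - u (n + 1)| ≤ K * (2 ^ n * ρ₀) ^ w) :
    ∃ E, ∀ n, |u n - E| ≤ K / (1 - 2 ^ w) * (2 ^ n * ρ₀) ^ w := by
  have hpow (n : ℕ) : (2 ^ n * ρ₀) ^ w = ρ₀ ^ w * ((2 : ℝ) ^ w) ^ n := by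
    rw [mul_rpow (by positivity) hρ₀.le, rpow_pow_comm zero_le_two, mul_comm]
  have hr : (2 : ℝ) ^ w < 1 := rpow_lt_one_of_one_lt_of_neg one_lt_two hw
  have hgeom (n : ℕ) : dist (u n) (u (n + 1)) ≤ K * ρ₀ ^ w * ((2 : ℝ) ^ w) ^ n := by
    rw [dist_eq, mul_assoc, ← hpow]; exact h n
  obtain ⟨E, hE⟩ := cauchySeq_tendsto_of_complete (cauchySeq_of_le_geometric _ _ hr hgeom)
  refine ⟨E, fun n => ?_⟩
  have := dist_le_of_le_geometric_of_tendsto _ _ hr hgeom hE n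
  rw [dist_eq] at this
  rw [hpow]
  convert this using 1
  ring

theorem exists_abs_coeff_sub_succ_le {d : ℕ} {J : Finset ℤ} {F : ℝ → ℝ} {b : ℕ → ℤ → ℕ → ℝ}
    {ρ₀ C σ ε : ℝ} (hρ₀ : 1 ≤ ρ₀) (hC : 0 ≤ C) (hσ : 0 ≤ σ) (hε : 0 < ε)
    (happrox : ∀ n, ∀ ρ ∈ Set.Icc (2 ^ n * ρ₀) (4 * (2 ^ n * ρ₀)),
      |F ρ - logPowerSum d J (b n) ρ| ≤ C * (2 ^ n * ρ₀) ^ (-σ)) :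
    ∀ j ∈ J, ∃ K, ∀ n, ∀ p ∈ Finset.range d,
      |b n j p - b (n + 1) j p| ≤ K * (2 ^ n * ρ₀) ^ ((j : ℝ) - σ + ε) := by
  obtain ⟨K, hK⟩ := exists_abs_coeff_le_of_abs_logPowerSum_le d J hε
  refine fun j hj => ⟨K * (2 * C) * 2 ^ ((j : ℝ) + ε), fun n p hp => ?_⟩
  set R := 2 ^ n * ρ₀
  have hR : 1 ≤ R := one_le_mul_of_one_le_of_one_le (one_le_pow₀ one_le_two) hρ₀
  have hR0 : 0 < R := by linarith
  -- `[2R, 4R]` lies in the ranges of both the `n`-th and the `(n+1)`-st expansion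
  have hoverlap : ∀ ρ ∈ Set.Icc (2 * R) (2 * (2 * R)),
      |logPowerSum d J (b n - b (n + 1)) ρ| ≤ 2 * C * R ^ (-σ) := by
    intro ρ ⟨h₁, h₂⟩
    have h₁' := happrox n ρ ⟨by linarith, by linarith⟩
    have h₂' := happrox (n + 1) ρ ⟨by rw [pow_succ]; linarith, by rw [pow_succ]; linarith⟩
    have hmono : (2 ^ (n + 1) * ρ₀) ^ (-σ) ≤ R ^ (-σ) :=
      rpow_le_rpow_of_nonpos hR0 (by rw [pow_succ]; linarith) (by linarith)
    rw [logPowerSum_sub]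
    calc _ = |(F ρ - logPowerSum d J (b (n + 1)) ρ) - (F ρ - logPowerSum d J (b n) ρ)| := by
          ring_nf
      _ ≤ C * (2 ^ (n + 1) * ρ₀) ^ (-σ) + C * R ^ (-σ) := (abs_sub _ _).trans (add_le_add h₂' h₁')
      _ ≤ 2 * C * R ^ (-σ) := by nlinarith [mul_le_mul_of_nonneg_left hmono hC]
  calc |b n j p - b (n + 1) j p| ≤ K * (2 * C * R ^ (-σ)) * (2 * R) ^ ((j : ℝ) + ε) :=
        hK _ _ _ (by linarith) hoverlap j hj p hp
    _ = K * (2 * C) * 2 ^ ((j : ℝ) + ε) * R ^ ((j : ℝ) - σ + ε) := by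
        rw [mul_rpow zero_le_two hR0.le, show (j : ℝ) - σ + ε = -σ + (j + ε) by ring,
          rpow_add hR0 (-σ)]
        ring

theorem exists_limit_of_abs_coeff_sub_succ_le {d : ℕ} {J : Finset ℤ} {b : ℕ → ℤ → ℕ → ℝ}
    {ρ₀ σ ε : ℝ} (hρ₀ : 0 < ρ₀)
    (hdiff : ∀ j ∈ J, ∃ K, ∀ n, ∀ p ∈ Finset.range d,
      |b n j p - b (n + 1) j p| ≤ K * (2 ^ n * ρ₀) ^ ((j : ℝ) - σ + ε)) :
    ∃ e : ℤ → ℕ → ℝ, ∀ j ∈ J, (j : ℝ) - σ + ε < 0 → ∀ p ∈ Finset.range d,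
      ∃ K, ∀ n, |b n j p - e j p| ≤ K * (2 ^ n * ρ₀) ^ ((j : ℝ) - σ + ε) := by
  have (j : ℤ) (p : ℕ) : ∃ E, j ∈ J → (j : ℝ) - σ + ε < 0 → p ∈ Finset.range d →
      ∃ K, ∀ n, |b n j p - E| ≤ K * (2 ^ n * ρ₀) ^ ((j : ℝ) - σ + ε) := by
    by_cases hj : j ∈ J ∧ (j : ℝ) - σ + ε < 0 ∧ p ∈ Finset.range d
    · obtain ⟨K, hK⟩ := hdiff j hj.1
      obtain ⟨E, hE⟩ := exists_abs_sub_le_of_abs_sub_succ_le hρ₀ hj.2.1 fun n => hK n p hj.2.2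
      exact ⟨E, fun _ _ _ => ⟨_, hE⟩⟩
    · exact ⟨0, fun h₁ h₂ h₃ => absurd ⟨h₁, h₂, h₃⟩ hj⟩
  choose e he using this
  exact ⟨e, fun j hj hw p hp => he j p hj hw hp⟩

-- A bound along `𝓟 (dyadicBlocks ρ₀)` is uniform in `n` and in `ρ ∈ [2ⁿρ₀, 2ⁿ⁺¹ρ₀]`.
def dyadicBlocks (ρ₀ : ℝ) : Set (ℕ × ℝ) :=
  {x | x.2 ∈ Set.Icc (2 ^ x.1 * ρ₀) (2 * (2 ^ x.1 * ρ₀))}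

theorem exists_mem_dyadicBlocks {ρ₀ ρ : ℝ} (hρ₀ : 0 < ρ₀) (hρ : ρ₀ ≤ ρ) :
    ∃ n, (n, ρ) ∈ dyadicBlocks ρ₀ := by
  obtain ⟨n, hn, hn'⟩ := exists_nat_pow_near ((one_le_div hρ₀).2 hρ) one_lt_two
  refine ⟨n, (le_div_iff₀ hρ₀).1 hn, ?_⟩
  rw [div_lt_iff₀ hρ₀, pow_succ] at hn'
  simp only
  linarith

theorem one_le_of_mem_dyadicBlocks {ρ₀ : ℝ} (hρ₀ : 1 ≤ ρ₀) {x : ℕ × ℝ}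
    (hx : x ∈ dyadicBlocks ρ₀) : 1 ≤ x.2 :=
  hρ₀.trans <| (le_mul_of_one_le_left (by linarith) (one_le_pow₀ one_le_two)).trans hx.1

theorem isBigO_dyadicBlocks_rpow {ρ₀ : ℝ} (hρ₀ : 0 < ρ₀) (w : ℝ) :
    (fun x : ℕ × ℝ => (2 ^ x.1 * ρ₀) ^ w) =O[𝓟 (dyadicBlocks ρ₀)] fun x => x.2 ^ w := by
  refine isBigO_principal.2 ⟨2 ^ |w|, fun x ⟨h₁, h₂⟩ => ?_⟩
  have hR : 0 < 2 ^ x.1 * ρ₀ := by positivity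
  rw [norm_of_nonneg (rpow_nonneg hR.le _), norm_of_nonneg (rpow_nonneg (hR.trans_le h₁).le _)]
  rcases le_or_gt 0 w with hw | hw
  · calc (2 ^ x.1 * ρ₀) ^ w ≤ x.2 ^ w := rpow_le_rpow hR.le h₁ hw
      _ ≤ 2 ^ |w| * x.2 ^ w := le_mul_of_one_le_left (rpow_nonneg (hR.trans_le h₁).le _)
          (one_le_rpow one_le_two (abs_nonneg w))
  · calc (2 ^ x.1 * ρ₀) ^ w ≤ (x.2 / 2) ^ w :=
          rpow_le_rpow_of_nonpos (by linarith) (by linarith) hw.le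
      _ = 2 ^ |w| * x.2 ^ w := by
          rw [div_rpow (hR.trans_le h₁).le zero_le_two, abs_of_neg hw, rpow_neg zero_le_two,
            div_eq_mul_inv, mul_comm]

theorem isBigO_log_pow_rpow {α : Type*} {l : Filter α} {ρ : α → ℝ} (hρ : ∀ᶠ x in l, 1 ≤ ρ x)
    (p : ℕ) {ε : ℝ} (hε : 0 < ε) : (fun x => log (ρ x) ^ p) =O[l] fun x => ρ x ^ ε := by
  obtain ⟨K, -, hK⟩ := exists_one_add_log_pow_le p hε
  refine IsBigO.of_bound K ?_
  filter_upwards [hρ] with x hx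
  have hlog := log_nonneg hx
  rw [norm_of_nonneg (pow_nonneg hlog p), norm_of_nonneg (rpow_nonneg (by linarith) ε)]
  exact (pow_le_pow_left₀ hlog (by linarith) p).trans (hK _ hx)

theorem isBigO_rpow_rpow_of_le {α : Type*} {l : Filter α} {ρ : α → ℝ} (hρ : ∀ᶠ x in l, 1 ≤ ρ x)
    {a b : ℝ} (hab : a ≤ b) : (fun x => ρ x ^ a) =O[l] fun x => ρ x ^ b := by
  refine IsBigO.of_bound 1 ?_
  filter_upwards [hρ] with x hx
  rw [one_mul, norm_of_nonneg (rpow_nonneg (by linarith) a),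
    norm_of_nonneg (rpow_nonneg (by linarith) b)]
  exact rpow_le_rpow_of_exponent_le hx hab

theorem isBigO_logPowerSum {α : Type*} {l : Filter α} {d : ℕ} {J : Finset ℤ}
    {b : α → ℤ → ℕ → ℝ} {ρ g : α → ℝ}
    (h : ∀ j ∈ J, ∀ p ∈ Finset.range d, (fun x => b x j p * ρ x ^ (-j) * log (ρ x) ^ p) =O[l] g) :
    (fun x => logPowerSum d J (b x) (ρ x)) =O[l] g :=
  IsBigO.fun_sum fun p hp => IsBigO.fun_sum fun j hj => h j hj p hp

theorem isBigO_dyadicBlocks_coeff_mul_zpow_mul_log_pow {ρ₀ K w ε σ : ℝ} (hρ₀ : 1 ≤ ρ₀)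
    (hε : 0 < ε) {b : ℕ → ℝ} (hb : ∀ n, |b n| ≤ K * (2 ^ n * ρ₀) ^ w) {j : ℤ} (p : ℕ)
    (hσ : w - j + ε ≤ σ) :
    (fun x : ℕ × ℝ => b x.1 * x.2 ^ (-j) * log x.2 ^ p) =O[𝓟 (dyadicBlocks ρ₀)]
      fun x => x.2 ^ σ := by
  have hρ : ∀ᶠ x in 𝓟 (dyadicBlocks ρ₀), 1 ≤ x.2 :=
    eventually_principal.2 fun x => one_le_of_mem_dyadicBlocks hρ₀
  have hb' : (fun x : ℕ × ℝ => b x.1) =O[𝓟 (dyadicBlocks ρ₀)] fun x => x.2 ^ w := by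
    refine (IsBigO.of_bound K (Eventually.of_forall fun x => ?_)).trans
      (isBigO_dyadicBlocks_rpow (by linarith) w)
    rw [norm_of_nonneg (rpow_nonneg (by positivity) _)]
    exact hb x.1
  have hzpow : (fun x : ℕ × ℝ => x.2 ^ (-j)) =O[𝓟 (dyadicBlocks ρ₀)] fun x => x.2 ^ (-j : ℝ) :=
    (isBigO_refl _ _).congr_right fun x => by rw [← Int.cast_neg, rpow_intCast]
  refine ((hb'.mul hzpow).mul (isBigO_log_pow_rpow hρ p hε)).trans
    ((isBigO_rpow_rpow_of_le hρ hσ).congr' ?_ EventuallyEq.rfl)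
  filter_upwards [hρ] with x hx
  rw [sub_eq_add_neg, rpow_add (by linarith), rpow_add (by linarith)]

theorem exists_forall_abs_le_of_isBigO_dyadicBlocks {ρ₀ σ : ℝ} (hρ₀ : 0 < ρ₀) {g : ℝ → ℝ}
    (h : (fun x : ℕ × ℝ => g x.2) =O[𝓟 (dyadicBlocks ρ₀)] fun x => x.2 ^ σ) :
    ∃ C, 0 ≤ C ∧ ∀ ρ, ρ₀ ≤ ρ → |g ρ| ≤ C * ρ ^ σ := by
  obtain ⟨C, hC, hCg⟩ := h.exists_nonneg
  refine ⟨C, hC, fun ρ hρ => ?_⟩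
  obtain ⟨n, hn⟩ := exists_mem_dyadicBlocks hρ₀ hρ
  simpa [norm_of_nonneg (rpow_nonneg (hρ₀.le.trans hρ) σ)] using isBigOWith_principal.1 hCg _ hn

theorem abs_le_abs_add_abs_of_abs_sub_le_mul_rpow {x E K R w : ℝ} (hR : 1 ≤ R) (hw : w ≤ 0)
    (h : |x - E| ≤ K * R ^ w) : |x| ≤ |K| + |E| := by
  have hRw : R ^ w ≤ 1 := rpow_le_one_of_one_le_of_nonpos hR hw
  have hKR : K * R ^ w ≤ |K| :=
    (mul_le_mul_of_nonneg_right (le_abs_self K) (rpow_nonneg (by linarith) w)).trans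
      (mul_le_of_le_one_right (abs_nonneg K) hRw)
  linarith [abs_sub_abs_le_abs_sub x E]

theorem isBigO_remainder_of_coeff_limit {d M : ℕ} (hM : 0 < M) {a C ρ₀ c : ℝ} (hρ₀ : 1 ≤ ρ₀)
    (hMa : 12 * (a + 1) ≤ (M : ℝ)) {f : ℝ → ℝ} {b : ℕ → ℤ → ℕ → ℝ} {e : ℤ → ℕ → ℝ}
    (hgrowth : ∀ n, ∀ j ∈ Finset.Icc (-(d : ℤ) + 1) (6 * (M : ℤ)), ∀ p ∈ Finset.range d,
      |b n j p| ≤ C * (2 ^ n * ρ₀) ^ (2 * (j : ℝ) / 3 + a))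
    (happrox : ∀ n, ∀ ρ ∈ Set.Icc (2 ^ n * ρ₀) (4 * (2 ^ n * ρ₀)),
      |f ρ - c * ρ ^ d - logPowerSum d (Finset.Icc (-(d : ℤ) + 1) (6 * (M : ℤ))) (b n) ρ| ≤
        C * (2 ^ n * ρ₀) ^ (-(M : ℝ)))
    (hlim : ∀ j ∈ Finset.Icc (-(d : ℤ) + 1) (6 * (M : ℤ)), (j : ℝ) - M + 1 / 12 < 0 →
      ∀ p ∈ Finset.range d,
        ∃ K, ∀ n, |b n j p - e j p| ≤ K * (2 ^ n * ρ₀) ^ ((j : ℝ) - M + 1 / 12)) :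
    (fun x : ℕ × ℝ => f x.2 - c * x.2 ^ d -
        logPowerSum d (Finset.Icc (-(d : ℤ) + 1) ((M / 6 : ℕ) : ℤ)) e x.2)
      =O[𝓟 (dyadicBlocks ρ₀)] fun x => x.2 ^ (-(M : ℝ) / 6) := by
  set J := Finset.Icc (-(d : ℤ) + 1) (6 * (M : ℤ))
  set m := M / 6 with hm
  set J' := Finset.Icc (-(d : ℤ) + 1) (m : ℤ)
  have hJ' : J' ⊆ J := Finset.Icc_subset_Icc le_rfl (by omega)
  have hm₁ : 6 * (m : ℝ) ≤ M := by exact_mod_cast (show 6 * m ≤ M by omega)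
  have hm₂ : (M : ℝ) ≤ 6 * m + 5 := by exact_mod_cast (show M ≤ 6 * m + 5 by omega)
  have hM1 : (1 : ℝ) ≤ M := by exact_mod_cast hM
  have hρ : ∀ᶠ x in 𝓟 (dyadicBlocks ρ₀), 1 ≤ x.2 :=
    eventually_principal.2 fun x => one_le_of_mem_dyadicBlocks hρ₀
  have hsplit : (fun x : ℕ × ℝ => f x.2 - c * x.2 ^ d - logPowerSum d J' e x.2) = fun x =>
      (f x.2 - c * x.2 ^ d - logPowerSum d J (b x.1) x.2) + logPowerSum d J' (b x.1 - e) x.2 +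
        logPowerSum d (J \ J') (b x.1) x.2 := by
    ext x
    rw [logPowerSum_sub, ← logPowerSum_sdiff_add hJ']
    ring
  rw [hsplit]
  refine (IsBigO.add (IsBigO.add ?_ ?_) ?_)
  · refine ((IsBigO.of_bound C (eventually_principal.2 fun x hx => ?_)).trans
      (isBigO_dyadicBlocks_rpow (by linarith) (-(M : ℝ)))).trans
      (isBigO_rpow_rpow_of_le hρ (by linarith))
    rw [norm_of_nonneg (rpow_nonneg (by positivity) _)]
    exact happrox x.1 x.2 ⟨hx.1, by linarith [hx.2, show 0 < 2 ^ x.1 * ρ₀ by positivity]⟩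
  · refine isBigO_logPowerSum fun j hj p hp => ?_
    have hjm : (j : ℝ) ≤ m := by exact_mod_cast (Finset.mem_Icc.1 hj).2
    obtain ⟨K, hK⟩ := hlim j (hJ' hj) (by linarith) p hp
    exact isBigO_dyadicBlocks_coeff_mul_zpow_mul_log_pow hρ₀ (ε := 1 / 12) (by norm_num)
      hK p (by linarith)
  · refine isBigO_logPowerSum fun j hj p hp => ?_
    obtain ⟨hjJ, hjJ'⟩ := Finset.mem_sdiff.1 hj
    have hjm : (m : ℝ) + 1 ≤ j := by
      have : (m : ℤ) + 1 ≤ j := by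
        simp only [J, J', Finset.mem_Icc] at hjJ hjJ'; omega
      exact_mod_cast this
    by_cases hjM : j < M
    · -- the coefficients converge, so they are bounded
      have hjM : (j : ℝ) ≤ M - 1 := by exact_mod_cast (show j ≤ M - 1 by omega)
      obtain ⟨K, hK⟩ := hlim j hjJ (by linarith) p hp
      refine isBigO_dyadicBlocks_coeff_mul_zpow_mul_log_pow hρ₀ (b := fun n => b n j p)
        (K := |K| + |e j p|) (w := 0) (ε := 1 / 12) (by norm_num) (fun n => ?_) p (by linarith)
      rw [rpow_zero, mul_one]
      exact abs_le_abs_add_abs_of_abs_sub_le_mul_rpow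
        (one_le_mul_of_one_le_of_one_le (one_le_pow₀ one_le_two) hρ₀) (by linarith) (hK n)
    · have hjM : (M : ℝ) ≤ j := by exact_mod_cast (show (M : ℤ) ≤ j by omega)
      exact isBigO_dyadicBlocks_coeff_mul_zpow_mul_log_pow hρ₀ (ε := 1 / 12) (by norm_num)
        (hgrowth · j hjJ p hp) p (by linarith)

theorem patching_dyadic_asymptotics_general (d : ℕ) (a C : ℝ) (hC : 0 ≤ C) (ρ₀ : ℝ) (hρ₀ : 2 ≤ ρ₀)
    (M : ℕ) (hM : 0 < M) (hMa : 12 * (a + 1) ≤ (M : ℝ))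
    (f : ℝ → ℝ) (c : ℝ)
    (h : ∀ n : ℕ, ∃ e : ℤ → ℕ → ℝ,
      (∀ j ∈ Finset.Icc (-(d : ℤ) + 1) (6 * (M : ℤ)), ∀ p ∈ Finset.range d,
        |e j p| ≤ C * ((2 : ℝ) ^ n * ρ₀) ^ (2 * (j : ℝ) / 3 + a)) ∧
      (∀ ρ ∈ Set.Icc ((2 : ℝ) ^ n * ρ₀) (4 * ((2 : ℝ) ^ n * ρ₀)),
        |f ρ - c * ρ ^ d -
            ∑ p ∈ Finset.range d, ∑ j ∈ Finset.Icc (-(d : ℤ) + 1) (6 * (M : ℤ)),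
              e j p * ρ ^ (-j) * Real.log ρ ^ p| ≤
          C * ((2 : ℝ) ^ n * ρ₀) ^ (-(M : ℝ)))) :
    ∃ (e : ℤ → ℕ → ℝ) (C' : ℝ), 0 ≤ C' ∧
      ∀ ρ : ℝ, ρ₀ ≤ ρ →
        |f ρ - c * ρ ^ d -
            ∑ p ∈ Finset.range d, ∑ j ∈ Finset.Icc (-(d : ℤ) + 1) ((M / 6 : ℕ) : ℤ),
              e j p * ρ ^ (-j) * Real.log ρ ^ p| ≤
          C' * ρ ^ (-(M : ℝ) / 6) := by
  choose b hgrowth happrox using h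
  have hρ₀' : 1 ≤ ρ₀ := by linarith
  have hdiff := exists_abs_coeff_sub_succ_le hρ₀' hC (Nat.cast_nonneg M)
    (by norm_num : (0 : ℝ) < 1 / 12) happrox
  obtain ⟨e, he⟩ := exists_limit_of_abs_coeff_sub_succ_le (by linarith) hdiff
  exact ⟨e, exists_forall_abs_le_of_isBigO_dyadicBlocks (by linarith)
    (isBigO_remainder_of_coeff_limit hM hρ₀' hMa hgrowth happrox he)⟩

theorem patching_dyadic_asymptotics (d : ℕ) (hd : 1 ≤ d) (a C : ℝ)
    (ha : 0 ≤ a) (hC : 0 ≤ C) (ρ₀ : ℝ) (hρ₀ : 2 ≤ ρ₀)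
    (M : ℕ) (hM : 0 < M) (hMa : 12 * (a + 1) ≤ (M : ℝ))
    (f : ℝ → ℝ) (c : ℝ)
    (h : ∀ n : ℕ, ∃ e : ℤ → ℕ → ℝ,
      (∀ j ∈ Finset.Icc (-(d : ℤ) + 1) (6 * (M : ℤ)), ∀ p ∈ Finset.range d,
        |e j p| ≤ C * ((2 : ℝ) ^ n * ρ₀) ^ (2 * (j : ℝ) / 3 + a)) ∧
      (∀ ρ ∈ Set.Icc ((2 : ℝ) ^ n * ρ₀) (4 * ((2 : ℝ) ^ n * ρ₀)),
        |f ρ - c * ρ ^ d -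
            ∑ p ∈ Finset.range d, ∑ j ∈ Finset.Icc (-(d : ℤ) + 1) (6 * (M : ℤ)),
              e j p * ρ ^ (-j) * Real.log ρ ^ p| ≤
          C * ((2 : ℝ) ^ n * ρ₀) ^ (-(M : ℝ)))) :
    ∃ (e : ℤ → ℕ → ℝ) (C' : ℝ), 0 ≤ C' ∧
      ∀ ρ : ℝ, ρ₀ ≤ ρ →
        |f ρ - c * ρ ^ d -
            ∑ p ∈ Finset.range d, ∑ j ∈ Finset.Icc (-(d : ℤ) + 1) ((M / 6 : ℕ) : ℤ),
              e j p * ρ ^ (-j) * Real.log ρ ^ p| ≤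
          C' * ρ ^ (-(M : ℝ) / 6) :=
  patching_dyadic_asymptotics_general d a C hC ρ₀ hρ₀ M hM hMa f c h
end

section
/- For every integer k ≤ 0 and every natural number p, there exist real numbers a_0, …, a_{p−1} and an entire function F : ℂ → ℂ that is real-valued on the reals, such that for all t > 0: ∫_1^∞ e^{−tλ} λ^{−k} (ln λ)^p dλ = t^{k−1} · ( Γ(1−k)·(ln(1/t))^p + Σ_{j=0}^{p−1} a_j·(ln(1/t))^j ) + F(t). -/
open MeasureTheory Set Filter Real
open scoped Complex

/-!
Write `k = -n`. Split `∫₁^∞ = ∫₀^∞ - ∫₀¹`. In `∫₀^∞` substitute `u = t x`: since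
`log x = log (1 / t) + log u`, the binomial theorem gives
`t^(-(n+1)) ∑ⱼ C(p, j) log (1 / t)^j ∫₀^∞ e^(-u) u^n (log u)^(p-j) du`, and the top term `j = p`
carries `∫₀^∞ e^(-u) u^n du = Γ(n + 1)`. The remaining `∫₀¹ e^(-t x) x^n (log x)^p dx` is the
Laplace transform of an integrable function supported in a bounded interval, so it extends to an
entire function of `t`.
-/

lemma abs_log_pow_le_rpow {u : ℝ} (hu₀ : 0 < u) (hu₁ : u ≤ 1) (q : ℕ) :
    |log u| ^ q ≤ (q + 1 : ℝ) ^ q * u ^ (-(q / (q + 1)) : ℝ) := by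
  have hlog : |log u| ≤ (q + 1) * u ^ (-(1 / (q + 1)) : ℝ) := by
    have h := log_le_rpow_div (inv_pos.2 hu₀).le (ε := 1 / (q + 1)) (by positivity)
    rwa [log_inv, ← abs_of_nonpos (log_nonpos hu₀.le hu₁), inv_rpow hu₀.le, ← rpow_neg hu₀.le,
      div_div_eq_mul_div, div_one, mul_comm] at h
  calc |log u| ^ q ≤ ((q + 1) * u ^ (-(1 / (q + 1)) : ℝ)) ^ q := by gcongr
    _ = (q + 1 : ℝ) ^ q * u ^ (-(q / (q + 1)) : ℝ) := by
      rw [mul_pow, ← rpow_natCast (u ^ _), ← rpow_mul hu₀.le]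
      congr 2
      ring

lemma integrableOn_pow_mul_log_pow_Ioc (n q : ℕ) :
    IntegrableOn (fun u : ℝ => u ^ n * log u ^ q) (Ioc 0 1) := by
  rw [integrableOn_Ioc_iff_integrableOn_Ioo]
  have hexp : -1 < -(q / (q + 1) : ℝ) := by
    rw [neg_lt_neg_iff, div_lt_one (by positivity)]
    linarith
  have hdom := ((intervalIntegral.integrableOn_Ioo_rpow_iff one_pos).2 hexp).const_mul
    ((q + 1 : ℝ) ^ q)
  refine hdom.mono' (by fun_prop) ((ae_restrict_iff' measurableSet_Ioo).2 (ae_of_all _ fun u ⟨hu₀, hu₁⟩ => ?_))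
  rw [norm_mul, norm_pow, norm_pow, Real.norm_of_nonneg hu₀.le, Real.norm_eq_abs]
  calc u ^ n * |log u| ^ q ≤ 1 * |log u| ^ q := by
        gcongr
        exact pow_le_one₀ hu₀.le hu₁.le
    _ ≤ _ := by rw [one_mul]; exact abs_log_pow_le_rpow hu₀ hu₁.le q

lemma integrableOn_exp_neg_mul_pow_mul_log_pow (n q : ℕ) :
    IntegrableOn (fun u : ℝ => exp (-u) * u ^ n * log u ^ q) (Ioi 0) := by
  rw [← Ioc_union_Ioi_eq_Ioi zero_le_one, integrableOn_union]
  constructor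
  · simp_rw [mul_assoc]
    refine (integrableOn_pow_mul_log_pow_Ioc n q).bdd_mul (c := 1) (by fun_prop)
      ((ae_restrict_iff' measurableSet_Ioc).2 (ae_of_all _ fun u hu => ?_))
    rw [Real.norm_of_nonneg (exp_pos _).le, exp_le_one_iff, neg_nonpos]
    exact hu.1.le
  · have hΓ : IntegrableOn (fun u : ℝ => exp (-u) * u ^ (n + q)) (Ioi 1) := by
      refine ((GammaIntegral_convergent (s := n + q + 1) (by positivity)).mono_set
        (Ioi_subset_Ioi zero_le_one)).congr_fun (fun u hu => ?_) measurableSet_Ioi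
      rw [← rpow_natCast]
      push_cast
      ring_nf
    refine hΓ.mono' (by fun_prop) ((ae_restrict_iff' measurableSet_Ioi).2
      (ae_of_all _ fun u (hu : 1 < u) => ?_))
    have hlog : 0 ≤ log u := log_nonneg hu.le
    rw [Real.norm_of_nonneg (by positivity), pow_add, ← mul_assoc]
    gcongr
    exact (log_le_sub_one_of_pos (by linarith)).trans (by linarith)

/-- The `j`-th derivative of `Real.Gamma` at `n + 1`. -/
noncomputable def gammaLogMoment (n j : ℕ) : ℝ :=
  ∫ u in Ioi 0, exp (-u) * u ^ n * log u ^ j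

lemma gammaLogMoment_zero (n : ℕ) : gammaLogMoment n 0 = Gamma (n + 1) := by
  rw [gammaLogMoment, Gamma_eq_integral (by positivity)]
  refine setIntegral_congr_fun measurableSet_Ioi fun u _ => ?_
  rw [add_sub_cancel_right, rpow_natCast, pow_zero, mul_one]

lemma exp_neg_mul_mul_pow_mul_log_pow_eq_sum {t x : ℝ} (ht : 0 < t) (hx : 0 < x) (n p : ℕ) :
    exp (-t * x) * x ^ n * log x ^ p =
      ∑ j ∈ Finset.range (p + 1), (t ^ n)⁻¹ * (p.choose j * log (1 / t) ^ j) *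
        (exp (-(t * x)) * (t * x) ^ n * log (t * x) ^ (p - j)) := by
  have hlog : log x = log (1 / t) + log (t * x) := by
    rw [log_mul ht.ne' hx.ne', one_div, log_inv]
    ring
  rw [hlog, add_pow, Finset.mul_sum]
  refine Finset.sum_congr rfl fun j _ => ?_
  rw [mul_pow]
  field_simp

lemma integrableOn_exp_neg_mul_pow_mul_log_pow_comp_mul {t : ℝ} (ht : 0 < t) (n q : ℕ) :
    IntegrableOn (fun x : ℝ => exp (-(t * x)) * (t * x) ^ n * log (t * x) ^ q) (Ioi 0) :=
  (integrableOn_Ioi_comp_mul_left_iff (fun u => exp (-u) * u ^ n * log u ^ q) 0 ht).2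
    (by simpa using integrableOn_exp_neg_mul_pow_mul_log_pow n q)

lemma integrableOn_exp_neg_mul_mul_pow_mul_log_pow {t : ℝ} (ht : 0 < t) (n p : ℕ) :
    IntegrableOn (fun x : ℝ => exp (-t * x) * x ^ n * log x ^ p) (Ioi 0) :=
  IntegrableOn.congr_fun (integrable_finsetSum _ fun j _ =>
    (integrableOn_exp_neg_mul_pow_mul_log_pow_comp_mul ht n (p - j)).const_mul _)
    (fun _ hx => (exp_neg_mul_mul_pow_mul_log_pow_eq_sum ht hx n p).symm) measurableSet_Ioi

lemma integral_exp_neg_mul_mul_pow_mul_log_pow {t : ℝ} (ht : 0 < t) (n p : ℕ) :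
    ∫ x in Ioi 0, exp (-t * x) * x ^ n * log x ^ p =
      (t ^ (n + 1))⁻¹ *
        ∑ j ∈ Finset.range (p + 1), p.choose j * gammaLogMoment n (p - j) * log (1 / t) ^ j := by
  rw [setIntegral_congr_fun measurableSet_Ioi
      (fun x hx => exp_neg_mul_mul_pow_mul_log_pow_eq_sum ht hx n p),
    integral_finsetSum _ fun j _ =>
      (integrableOn_exp_neg_mul_pow_mul_log_pow_comp_mul ht n (p - j)).const_mul _,
    Finset.mul_sum]
  refine Finset.sum_congr rfl fun j _ => ?_
  have hsubst := integral_comp_mul_left_Ioi (fun u => exp (-u) * u ^ n * log u ^ (p - j)) 0 ht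
  rw [mul_zero] at hsubst
  rw [integral_const_mul, hsubst, gammaLogMoment, smul_eq_mul, pow_succ]
  ring

lemma norm_cexp_neg_mul_le (z : ℂ) {x R : ℝ} (hx : |x| ≤ R) :
    ‖cexp (-z * x)‖ ≤ exp (‖z‖ * R) := by
  rw [Complex.norm_exp, exp_le_exp]
  calc (-z * x).re = -(z.re * x) := by simp
    _ ≤ |z.re * x| := neg_le_abs _
    _ ≤ ‖z‖ * R := by
      rw [abs_mul]
      exact mul_le_mul (Complex.abs_re_le_norm z) hx (abs_nonneg _) (norm_nonneg _)

theorem differentiable_integral_cexp_neg_mul {μ : Measure ℝ} {g : ℝ → ℂ} (hg : Integrable g μ)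
    {R : ℝ} (hR : ∀ᵐ x ∂μ, |x| ≤ R) :
    Differentiable ℂ fun z : ℂ => ∫ x, cexp (-z * x) * g x ∂μ := by
  have hmeas : ∀ z : ℂ, AEStronglyMeasurable (fun x : ℝ => cexp (-z * x)) μ := fun z => by
    fun_prop
  intro z₀
  refine (hasDerivAt_integral_of_dominated_loc_of_deriv_le
    (F' := fun z x => cexp (-z * x) * -x * g x)
    (bound := fun x => exp ((‖z₀‖ + 1) * R) * R * ‖g x‖) (Metric.ball_mem_nhds z₀ one_pos)
    (Eventually.of_forall fun z => (hmeas z).mul hg.aestronglyMeasurable)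
    (hg.bdd_mul (hmeas z₀) (hR.mono fun x hx => norm_cexp_neg_mul_le z₀ hx))
    (((hmeas z₀).mul (by fun_prop)).mul hg.aestronglyMeasurable) ?_
    ((hg.norm.const_mul _)) ?_).2.differentiableAt
  · filter_upwards [hR] with x hx z hz
    have hz : ‖z‖ ≤ ‖z₀‖ + 1 := by
      have := norm_le_norm_add_norm_sub' z z₀
      rw [Metric.mem_ball, dist_eq_norm] at hz
      linarith
    have hR₀ : 0 ≤ R := (abs_nonneg x).trans hx
    rw [norm_mul, norm_mul, norm_neg, Complex.norm_real, Real.norm_eq_abs]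
    gcongr
    exact (norm_cexp_neg_mul_le z hx).trans (by gcongr)
  · refine ae_of_all _ fun x z _ => ?_
    have hexp : HasDerivAt (fun z : ℂ => cexp (-z * x)) (cexp (-z * x) * -x) z := by
      simpa using ((hasDerivAt_id z).neg.mul_const (x : ℂ)).cexp
    exact hexp.mul_const (g x)

lemma integral_cexp_neg_mul_ofReal {μ : Measure ℝ} (g : ℝ → ℝ) (s : ℝ) :
    ∫ x, cexp (-s * x) * g x ∂μ = ↑(∫ x, exp (-s * x) * g x ∂μ) := by
  rw [← integral_complex_ofReal]
  push_cast
  rfl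

theorem laplace_integral_expansion_nonpos_k (k : ℤ) (hk : k ≤ 0) (p : ℕ) :
    ∃ (a : ℕ → ℝ) (F : ℂ → ℂ), Differentiable ℂ F ∧ (∀ x : ℝ, (F x).im = 0) ∧
      ∀ t : ℝ, 0 < t →
        (∫ x in Set.Ioi (1 : ℝ), Real.exp (-t * x) * x ^ (-k) * Real.log x ^ p) =
          t ^ (k - 1) *
            (Real.Gamma (1 - (k : ℝ)) * Real.log (1 / t) ^ p +
              ∑ j ∈ Finset.range p, a j * Real.log (1 / t) ^ j) +
          (F t).re := by
  obtain ⟨n, rfl⟩ : ∃ n : ℕ, k = -n := ⟨(-k).toNat, by omega⟩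
  have hg : IntegrableOn (fun x : ℝ => ((x ^ n * log x ^ p : ℝ) : ℂ)) (Ioc 0 1) :=
    (integrableOn_pow_mul_log_pow_Ioc n p).ofReal
  have hR : ∀ᵐ x ∂volume.restrict (Ioc (0 : ℝ) 1), |x| ≤ 1 :=
    (ae_restrict_iff' measurableSet_Ioc).2 <| ae_of_all _ fun x hx =>
      abs_le.2 ⟨by linarith [hx.1], hx.2⟩
  refine ⟨fun j => p.choose j * gammaLogMoment n (p - j),
    fun z => -∫ x : ℝ in Ioc 0 1, cexp (-z * x) * (x ^ n * log x ^ p : ℝ),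
    (differentiable_integral_cexp_neg_mul hg hR).neg, fun x => ?_, fun t ht => ?_⟩
  · simp only [Complex.neg_im, integral_cexp_neg_mul_ofReal, Complex.ofReal_im, neg_zero]
  have hint := integrableOn_exp_neg_mul_mul_pow_mul_log_pow ht n p
  have hsplit := intervalIntegral.integral_interval_add_Ioi hint
    (hint.mono_set (Ioi_subset_Ioi zero_le_one))
  rw [intervalIntegral.integral_of_le zero_le_one, integral_exp_neg_mul_mul_pow_mul_log_pow ht,
    Finset.sum_range_succ, Nat.choose_self, Nat.sub_self, gammaLogMoment_zero] at hsplit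
  simp only [neg_neg, zpow_natCast, Complex.neg_re, integral_cexp_neg_mul_ofReal,
    Complex.ofReal_re, Int.cast_neg, Int.cast_natCast, sub_neg_eq_add]
  rw [show (-(n : ℤ) - 1) = -((n + 1 : ℕ) : ℤ) by omega, zpow_neg, zpow_natCast, add_comm 1]
  simp only [mul_assoc] at hsplit ⊢
  linarith
end

section
/- For every integer k and every natural number p, there exist real numbers a''_0, …, a''_{p−1} and an entire function F : ℂ → ℂ that is real-valued on the reals, such that for all t > 0: ∫_1^∞ e^{−tλ} λ^{−k−1/2} (ln λ)^p dλ = t^{k−1/2} · ( Γ(1/2 − k)·(ln(1/t))^p + Σ_{j=0}^{p−1} a''_j·(ln(1/t))^j ) + F(t). -/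
/-!
For `Re s > 0`, splitting Euler's integral at `1` and integrating the exponential series termwise
on `(0, 1]` gives
`∫₁^∞ e^{-tx} x^{s-1} dx = t^{-s} Γ(s) - ∑ₙ (-t)ⁿ / (n! (s + n))`.
The left side is entire in `s` and the series is holomorphic off the poles `0, -1, -2, …` of `Γ`,
so the identity persists on their (connected) complement. Differentiating `p` times in `s` brings
down `(log x)^p` on the left; at `s = 1/2 - k` the Leibniz rule applied to `e^{s log(1/t)} Γ(s)`
produces the polynomial in `log(1/t)`, while the `p`-th derivative of the series is, up to the
factor `(-1)^p p!`, the entire function `∑ₙ (-t)ⁿ / (n! (s + n)^{p+1})` of `t`, real on the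
reals.
-/

open MeasureTheory Set Metric Filter Topology Complex
open scoped Nat

def gammaPoles : Set ℂ := range fun n : ℕ => -(n : ℂ)

lemma mem_gammaPoles_compl {s : ℂ} : s ∈ gammaPolesᶜ ↔ ∀ m : ℕ, s ≠ -m := by
  simp [gammaPoles, eq_comm]

lemma isClosed_gammaPoles : IsClosed gammaPoles := by
  refine isClosed_of_pairwise_le_dist one_pos ?_
  rintro _ ⟨m, rfl⟩ _ ⟨n, rfl⟩ hmn
  have hmn' : m ≠ n := by rintro rfl; exact hmn rfl
  rw [dist_neg_neg, dist_of_im_eq (by simp), natCast_re, natCast_re, Nat.dist_cast_real]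
  exact_mod_cast Nat.pairwise_one_le_dist hmn'

lemma isOpen_gammaPoles_compl : IsOpen gammaPolesᶜ := isClosed_gammaPoles.isOpen_compl

lemma isPreconnected_gammaPoles_compl : IsPreconnected gammaPolesᶜ :=
  ((countable_range _).isConnected_compl_of_one_lt_rank
    (by rw [rank_real_complex]; norm_num)).isPreconnected

lemma differentiableOn_Gamma : DifferentiableOn ℂ Gamma gammaPolesᶜ := fun s hs =>
  (differentiableAt_Gamma s (mem_gammaPoles_compl.1 hs)).differentiableWithinAt

lemma exists_ball_le_norm_add_natCast {s₀ : ℂ} (h : s₀ ∈ gammaPolesᶜ) :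
    ∃ δ > 0, ∀ s ∈ ball s₀ δ, ∀ n : ℕ, δ ≤ ‖s + n‖ := by
  have hpos : 0 < infDist s₀ gammaPoles :=
    (isClosed_gammaPoles.notMem_iff_infDist_pos ⟨0, 0, by simp⟩).1 h
  refine ⟨infDist s₀ gammaPoles / 2, half_pos hpos, fun s hs n => ?_⟩
  have hn : infDist s gammaPoles ≤ ‖s + n‖ := by
    have := infDist_le_dist_of_mem (x := s) (mem_range_self n : -(n : ℂ) ∈ gammaPoles)
    rwa [dist_eq, sub_neg_eq_add] at this
  have := infDist_le_infDist_add_dist (x := s₀) (y := s) (s := gammaPoles)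
  rw [mem_ball] at hs
  rw [dist_comm] at this
  linarith

noncomputable def expPoleSeries (q : ℕ) (z s : ℂ) : ℂ :=
  ∑' n : ℕ, (-z) ^ n / n ! / (s + n) ^ (q + 1)

lemma norm_expPoleSeries_term_le {q n : ℕ} {z s : ℂ} {δ R : ℝ} (hδ : 0 < δ)
    (hs : δ ≤ ‖s + n‖) (hz : ‖z‖ ≤ R) :
    ‖(-z) ^ n / n ! / (s + n) ^ (q + 1)‖ ≤ (δ ^ (q + 1))⁻¹ * (R ^ n / n !) := by
  rw [norm_div, norm_div, norm_pow, norm_pow, norm_neg, Complex.norm_natCast, div_eq_mul_inv,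
    mul_comm]
  gcongr

lemma hasDerivAt_expPoleSeries (q : ℕ) (z : ℂ) {s : ℂ} (hs : s ∈ gammaPolesᶜ) :
    HasDerivAt (expPoleSeries q z) (-(q + 1) * expPoleSeries (q + 1) z s) s := by
  obtain ⟨δ, hδ, hball⟩ := exists_ball_le_norm_add_natCast hs
  have hne : ∀ w ∈ ball s δ, ∀ n : ℕ, w + n ≠ 0 := fun w hw n h0 => by
    have := hball w hw n
    rw [h0, norm_zero] at this
    linarith
  have hterm : ∀ (n : ℕ), ∀ w ∈ ball s δ,
      HasDerivAt (fun w => (-z) ^ n / n ! / (w + n) ^ (q + 1))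
        (-(q + 1) * ((-z) ^ n / n ! / (w + n) ^ (q + 2))) w := fun n w hw => by
    have hpow : HasDerivAt (fun w : ℂ => (w + n) ^ (q + 1)) ((q + 1) * (w + n) ^ q) w := by
      simpa using ((hasDerivAt_id w).add_const (n : ℂ)).fun_pow (q + 1)
    refine ((hasDerivAt_const w ((-z) ^ n / n !)).div hpow
      (pow_ne_zero _ (hne w hw n))).congr_deriv ?_
    have := hne w hw n
    field_simp
    ring
  have key := hasDerivAt_tsum_of_isPreconnected
    (u := fun n => (q + 1) * (δ ^ (q + 2))⁻¹ * (‖z‖ ^ n / n !))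
    ((Real.summable_pow_div_factorial _).mul_left _) isOpen_ball (convex_ball s δ).isPreconnected
    hterm (fun n w hw => ?_) (mem_ball_self hδ) ?_ (mem_ball_self hδ)
  · rwa [tsum_mul_left] at key
  · rw [norm_mul, mul_assoc]
    gcongr
    · rw [norm_neg, ← Nat.cast_add_one, Complex.norm_natCast, Nat.cast_add_one]
    · exact norm_expPoleSeries_term_le hδ (hball w hw n) le_rfl
  · exact Summable.of_norm_bounded ((Real.summable_pow_div_factorial _).mul_left _)
      fun n => norm_expPoleSeries_term_le hδ (hball s (mem_ball_self hδ) n) le_rfl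

lemma iteratedDeriv_expPoleSeries (q : ℕ) (z : ℂ) {s : ℂ} (hs : s ∈ gammaPolesᶜ) :
    iteratedDeriv q (expPoleSeries 0 z) s = (-1) ^ q * q ! * expPoleSeries q z s := by
  induction q generalizing s with
  | zero => simp
  | succ q ih =>
    have hev : iteratedDeriv q (expPoleSeries 0 z) =ᶠ[𝓝 s]
        fun w => (-1) ^ q * q ! * expPoleSeries q z w :=
      eventually_of_mem (isOpen_gammaPoles_compl.mem_nhds hs) fun w hw => ih hw
    rw [iteratedDeriv_succ, hev.deriv_eq, ((hasDerivAt_expPoleSeries q z hs).const_mul _).deriv]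
    push_cast [Nat.factorial_succ]
    ring

lemma differentiable_expPoleSeries_left (q : ℕ) {s : ℂ} (hs : s ∈ gammaPolesᶜ) :
    Differentiable ℂ fun z => expPoleSeries q z s := by
  obtain ⟨δ, hδ, hball⟩ := exists_ball_le_norm_add_natCast hs
  intro z₀
  have hdiff : DifferentiableOn ℂ (fun z => expPoleSeries q z s) (ball 0 (‖z₀‖ + 1)) :=
    differentiableOn_tsum_of_summable_norm
      ((Real.summable_pow_div_factorial (‖z₀‖ + 1)).mul_left (δ ^ (q + 1))⁻¹)
      (fun n => by fun_prop) isOpen_ball fun n z hz =>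
        norm_expPoleSeries_term_le hδ (hball s (mem_ball_self hδ) n)
          (by simpa using (mem_ball_zero_iff.1 hz).le)
  exact hdiff.differentiableAt (isOpen_ball.mem_nhds (by simp))

lemma expPoleSeries_ofReal_im (q : ℕ) (x σ : ℝ) : (expPoleSeries q x σ).im = 0 := by
  have : expPoleSeries q x σ = ↑(∑' n : ℕ, (-x) ^ n / n ! / (σ + n) ^ (q + 1)) := by
    rw [expPoleSeries, ofReal_tsum]
    push_cast
    rfl
  rw [this, ofReal_im]

lemma integrableOn_exp_neg_mul_mul_rpow_mul_log_pow {t : ℝ} (ht : 0 < t) (a : ℝ) (q : ℕ) :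
    IntegrableOn (fun x : ℝ => Real.exp (-t * x) * x ^ a * Real.log x ^ q) (Ioi 1) := by
  have hdom : IntegrableOn (fun x : ℝ => x ^ (|a| + q) * Real.exp (-t * x)) (Ioi 1) := by
    have := integrableOn_rpow_mul_exp_neg_mul_rpow (p := 1) (s := |a| + q)
      (by linarith [abs_nonneg a, q.cast_nonneg (α := ℝ)]) one_pos ht
    simp only [Real.rpow_one] at this
    exact this.mono_set (Ioi_subset_Ioi zero_le_one)
  refine hdom.mono' (by fun_prop) ((ae_restrict_iff' measurableSet_Ioi).2 (ae_of_all _ ?_))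
  intro x (hx : 1 < x)
  have hlog : 0 ≤ Real.log x := Real.log_nonneg hx.le
  rw [Real.norm_of_nonneg (by positivity), Real.rpow_add (by positivity), Real.rpow_natCast]
  calc Real.exp (-t * x) * x ^ a * Real.log x ^ q
      ≤ Real.exp (-t * x) * x ^ |a| * x ^ q := by
        gcongr
        · exact hx.le
        · exact le_abs_self a
        · exact Real.log_le_self (by positivity)
    _ = _ := by ring

noncomputable def laplaceTailIntegrand (t : ℝ) (q : ℕ) (s : ℂ) (x : ℝ) : ℂ :=
  Real.exp (-t * x) * (x : ℂ) ^ (s - 1) * Real.log x ^ q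

/-- `laplaceTail t p (1/2 - k)` is the paper's `I₂(t; k, p)`. -/
noncomputable def laplaceTail (t : ℝ) (q : ℕ) (s : ℂ) : ℂ :=
  ∫ x in Ioi (1 : ℝ), laplaceTailIntegrand t q s x

lemma norm_laplaceTailIntegrand (t : ℝ) (q : ℕ) (s : ℂ) {x : ℝ} (hx : 1 < x) :
    ‖laplaceTailIntegrand t q s x‖ = Real.exp (-t * x) * x ^ (s.re - 1) * Real.log x ^ q := by
  rw [laplaceTailIntegrand, norm_mul, norm_mul, norm_pow, norm_real, norm_real,
    norm_cpow_eq_rpow_re_of_pos (by linarith), Real.norm_of_nonneg (Real.exp_nonneg _),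
    Real.norm_of_nonneg (Real.log_nonneg hx.le), sub_re, one_re]

lemma aestronglyMeasurable_laplaceTailIntegrand (t : ℝ) (q : ℕ) (s : ℂ) :
    AEStronglyMeasurable (laplaceTailIntegrand t q s) (volume.restrict (Ioi 1)) := by
  unfold laplaceTailIntegrand
  fun_prop

lemma integrableOn_laplaceTailIntegrand {t : ℝ} (ht : 0 < t) (q : ℕ) (s : ℂ) :
    IntegrableOn (laplaceTailIntegrand t q s) (Ioi 1) :=
  (integrableOn_exp_neg_mul_mul_rpow_mul_log_pow ht (s.re - 1) q).mono'
    (aestronglyMeasurable_laplaceTailIntegrand t q s)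
    ((ae_restrict_iff' measurableSet_Ioi).2 (ae_of_all _ fun _ hx =>
      (norm_laplaceTailIntegrand t q s hx).le))

lemma hasDerivAt_laplaceTailIntegrand (t : ℝ) (q : ℕ) (s : ℂ) {x : ℝ} (hx : 0 < x) :
    HasDerivAt (laplaceTailIntegrand t q · x) (laplaceTailIntegrand t (q + 1) s x) s := by
  have hcpow :
      HasDerivAt (fun s : ℂ => (x : ℂ) ^ (s - 1)) ((x : ℂ) ^ (s - 1) * Real.log x) s := by
    simpa [ofReal_log hx.le] using
      ((hasDerivAt_id s).sub_const 1).const_cpow (Or.inl (ofReal_ne_zero.2 hx.ne'))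
  refine ((hcpow.const_mul _).mul_const _).congr_deriv ?_
  simp only [laplaceTailIntegrand]
  ring

lemma hasDerivAt_laplaceTail {t : ℝ} (ht : 0 < t) (q : ℕ) (s : ℂ) :
    HasDerivAt (laplaceTail t q) (laplaceTail t (q + 1) s) s := by
  refine (hasDerivAt_integral_of_dominated_loc_of_deriv_le (ball_mem_nhds s one_pos)
    (Eventually.of_forall (aestronglyMeasurable_laplaceTailIntegrand t q))
    (integrableOn_laplaceTailIntegrand ht q s) (aestronglyMeasurable_laplaceTailIntegrand t _ s)
    (bound := fun x => Real.exp (-t * x) * x ^ s.re * Real.log x ^ (q + 1)) ?_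
    (integrableOn_exp_neg_mul_mul_rpow_mul_log_pow ht s.re (q + 1)) ?_).2
  · refine (ae_restrict_iff' measurableSet_Ioi).2 (ae_of_all _ fun x (hx : 1 < x) w hw => ?_)
    have hre : w.re - 1 ≤ s.re := by
      have := (abs_re_le_norm (w - s)).trans (mem_ball_iff_norm.1 hw).le
      rw [sub_re, abs_le] at this
      linarith
    rw [norm_laplaceTailIntegrand t _ w hx]
    have := Real.log_nonneg hx.le
    gcongr
    exact hx.le
  · exact (ae_restrict_iff' measurableSet_Ioi).2 (ae_of_all _ fun x (hx : 1 < x) w _ =>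
      hasDerivAt_laplaceTailIntegrand t q w (by linarith))

lemma iteratedDeriv_laplaceTail {t : ℝ} (ht : 0 < t) (q : ℕ) :
    iteratedDeriv q (laplaceTail t 0) = laplaceTail t q := by
  induction q with
  | zero => exact iteratedDeriv_zero
  | succ q ih =>
    rw [iteratedDeriv_succ, ih]
    exact funext fun s => (hasDerivAt_laplaceTail ht q s).deriv

lemma integral_Ioc_zero_one_cpow {r : ℂ} (hr : -1 < r.re) :
    ∫ x in Ioc (0 : ℝ) 1, (x : ℂ) ^ r = 1 / (r + 1) := by
  have hr1 : r + 1 ≠ 0 := fun h => by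
    have := congrArg re (eq_neg_of_add_eq_zero_left h)
    simp only [neg_re, one_re] at this
    linarith
  rw [← intervalIntegral.integral_of_le zero_le_one, integral_cpow (Or.inl hr), ofReal_one,
    one_cpow, ofReal_zero, zero_cpow hr1, sub_zero]

lemma integrableOn_Ioc_zero_one_cpow {r : ℂ} (hr : -1 < r.re) :
    IntegrableOn (fun x : ℝ => (x : ℂ) ^ r) (Ioc 0 1) :=
  (intervalIntegrable_iff_integrableOn_Ioc_of_le zero_le_one).1
    (intervalIntegral.intervalIntegrable_cpow' hr)

lemma integral_Ioc_zero_one_norm_cpow {r : ℂ} (hr : -1 < r.re) :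
    ∫ x in Ioc (0 : ℝ) 1, ‖(x : ℂ) ^ r‖ = 1 / (r.re + 1) := by
  rw [setIntegral_congr_fun measurableSet_Ioc fun x hx => norm_cpow_eq_rpow_re_of_pos hx.1 r,
    ← intervalIntegral.integral_of_le zero_le_one, integral_rpow (Or.inl hr), Real.one_rpow,
    Real.zero_rpow (by linarith), sub_zero]

lemma integral_Ioc_cpow_mul_exp_neg_mul (z : ℂ) {s : ℂ} (hs : 0 < s.re) :
    ∫ x in Ioc (0 : ℝ) 1, (x : ℂ) ^ (s - 1) * cexp (-(z * x)) = expPoleSeries 0 z s := by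
  set F : ℕ → ℝ → ℂ := fun n x => (-z) ^ n / n ! * (x : ℂ) ^ (s - 1 + n)
  have hre : ∀ n : ℕ, -1 < (s - 1 + n).re := fun n => by
    simp only [add_re, sub_re, one_re, natCast_re]; linarith [n.cast_nonneg (α := ℝ)]
  have hF_int : ∀ n, IntegrableOn (F n) (Ioc 0 1) := fun n =>
    (integrableOn_Ioc_zero_one_cpow (hre n)).const_mul _
  have hsum : Summable fun n => ∫ x in Ioc (0 : ℝ) 1, ‖F n x‖ := by
    refine Summable.of_nonneg_of_le (fun n => integral_nonneg fun x => norm_nonneg _) (fun n => ?_)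
      ((Real.summable_pow_div_factorial ‖z‖).mul_right s.re⁻¹)
    simp only [F, norm_mul, integral_const_mul, integral_Ioc_zero_one_norm_cpow (hre n), norm_div,
      norm_pow, norm_neg, Complex.norm_natCast, add_re, sub_re, one_re, natCast_re]
    rw [one_div]
    gcongr
    linarith [n.cast_nonneg (α := ℝ)]
  have hF_integral :
      ∀ n : ℕ, ∫ x in Ioc (0 : ℝ) 1, F n x = (-z) ^ n / n ! / (s + n) ^ (0 + 1) :=
    fun n => by
      rw [integral_const_mul, integral_Ioc_zero_one_cpow (hre n)]
      ring_nf
  have hexp : ∀ x ∈ Ioc (0 : ℝ) 1, (x : ℂ) ^ (s - 1) * cexp (-(z * x)) = ∑' n, F n x :=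
    fun x hx => by
      rw [exp_eq_exp_ℂ,
        ← ((NormedSpace.expSeries_div_hasSum_exp (-(z * x))).mul_left _).tsum_eq]
      refine tsum_congr fun n => ?_
      simp only [F]
      rw [cpow_add _ _ (ofReal_ne_zero.2 hx.1.ne'), cpow_natCast, ← neg_mul, mul_pow]
      ring
  rw [setIntegral_congr_fun measurableSet_Ioc hexp,
    ← integral_tsum_of_summable_integral_norm hF_int hsum, expPoleSeries]
  exact tsum_congr hF_integral

lemma laplaceTailIntegrand_zero (t : ℝ) (s : ℂ) :
    laplaceTailIntegrand t 0 s = fun x : ℝ => (x : ℂ) ^ (s - 1) * cexp (-(t * x)) := by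
  ext x
  simp [laplaceTailIntegrand, ofReal_exp, mul_comm]

lemma laplaceTail_zero_eq_of_re_pos {t : ℝ} (ht : 0 < t) {s : ℂ} (hs : 0 < s.re) :
    laplaceTail t 0 s = (1 / t) ^ s * Gamma s - expPoleSeries 0 t s := by
  have hIoc : IntegrableOn (fun x : ℝ => (x : ℂ) ^ (s - 1) * cexp (-(t * x))) (Ioc 0 1) :=
    (integrableOn_Ioc_zero_one_cpow (by simpa using hs)).mul_continuousOn_of_subset
      (by fun_prop) measurableSet_Ioc isCompact_Icc Ioc_subset_Icc_self
  have hIoi : IntegrableOn (fun x : ℝ => (x : ℂ) ^ (s - 1) * cexp (-(t * x))) (Ioi 1) :=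
    laplaceTailIntegrand_zero t s ▸ integrableOn_laplaceTailIntegrand ht 0 s
  rw [← integral_cpow_mul_exp_neg_mul_Ioi hs ht, ← integral_Ioc_cpow_mul_exp_neg_mul _ hs,
    ← Ioc_union_Ioi_eq_Ioi zero_le_one, setIntegral_union (Ioc_disjoint_Ioi le_rfl)
      measurableSet_Ioi hIoc hIoi, add_sub_cancel_left, laplaceTail, laplaceTailIntegrand_zero]

lemma analyticOnNhd_cpow_mul_Gamma {c : ℂ} (hc : c ≠ 0) :
    AnalyticOnNhd ℂ (fun s => c ^ s * Gamma s) gammaPolesᶜ :=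
  ((differentiable_id.const_cpow (Or.inl hc)).differentiableOn.mul
    differentiableOn_Gamma).analyticOnNhd isOpen_gammaPoles_compl

lemma analyticOnNhd_expPoleSeries (z : ℂ) : AnalyticOnNhd ℂ (expPoleSeries 0 z) gammaPolesᶜ :=
  DifferentiableOn.analyticOnNhd (fun _ hs =>
    (hasDerivAt_expPoleSeries 0 z hs).differentiableAt.differentiableWithinAt)
    isOpen_gammaPoles_compl

lemma laplaceTail_zero_eqOn {t : ℝ} (ht : 0 < t) :
    EqOn (laplaceTail t 0) (fun s => (1 / t) ^ s * Gamma s - expPoleSeries 0 t s)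
      gammaPolesᶜ := by
  have hTail : AnalyticOnNhd ℂ (laplaceTail t 0) gammaPolesᶜ :=
    DifferentiableOn.analyticOnNhd (fun s _ =>
      (hasDerivAt_laplaceTail ht 0 s).differentiableAt.differentiableWithinAt)
      isOpen_gammaPoles_compl
  have hone : (1 : ℂ) ∈ gammaPolesᶜ := mem_gammaPoles_compl.2 fun m h => by
    have := congrArg re h
    simp only [one_re, neg_re, natCast_re] at this
    linarith [m.cast_nonneg (α := ℝ)]
  refine hTail.eqOn_of_preconnected_of_eventuallyEq
    ((analyticOnNhd_cpow_mul_Gamma (by simpa using ht.ne')).sub (analyticOnNhd_expPoleSeries _))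
    isPreconnected_gammaPoles_compl hone ?_
  filter_upwards [(isOpen_lt continuous_const continuous_re).mem_nhds (by simp : (0 : ℝ) < re 1)]
    with s hs using laplaceTail_zero_eq_of_re_pos ht hs

lemma iteratedDeriv_cpow_mul_Gamma {c : ℂ} (hc : c ≠ 0) (q : ℕ) {s : ℂ}
    (hs : s ∈ gammaPolesᶜ) :
    iteratedDeriv q (fun s => c ^ s * Gamma s) s = c ^ s *
      ∑ i ∈ Finset.range (q + 1), q.choose i * log c ^ i * iteratedDeriv (q - i) Gamma s := by
  simp_rw [cpow_def_of_ne_zero hc]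
  rw [iteratedDeriv_fun_mul (by fun_prop)
    ((differentiableOn_Gamma.analyticOnNhd isOpen_gammaPoles_compl) s hs).contDiffAt,
    Finset.mul_sum]
  refine Finset.sum_congr rfl fun i _ => ?_
  rw [iteratedDeriv_cexp_const_mul]
  ring

lemma laplaceTail_eq {t : ℝ} (ht : 0 < t) (q : ℕ) {s : ℂ} (hs : s ∈ gammaPolesᶜ) :
    laplaceTail t q s = (1 / t) ^ s * ∑ i ∈ Finset.range (q + 1),
        q.choose i * log (1 / t) ^ i * iteratedDeriv (q - i) Gamma s -
      (-1) ^ q * q ! * expPoleSeries q t s := by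
  have hc : (1 / t : ℂ) ≠ 0 := by simpa using ht.ne'
  rw [← iteratedDeriv_laplaceTail ht, (laplaceTail_zero_eqOn ht).iteratedDeriv_of_isOpen
    isOpen_gammaPoles_compl q hs, iteratedDeriv_fun_sub
      (analyticOnNhd_cpow_mul_Gamma hc s hs).contDiffAt
      (analyticOnNhd_expPoleSeries _ s hs).contDiffAt,
    iteratedDeriv_cpow_mul_Gamma hc q hs, iteratedDeriv_expPoleSeries q _ hs]

lemma laplaceTail_ofReal (t : ℝ) (q : ℕ) (σ : ℝ) :
    laplaceTail t q σ =
      ↑(∫ x in Ioi (1 : ℝ), Real.exp (-t * x) * x ^ (σ - 1) * Real.log x ^ q) := by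
  rw [laplaceTail, ← integral_complex_ofReal]
  refine setIntegral_congr_fun measurableSet_Ioi fun x (hx : 1 < x) => ?_
  rw [laplaceTailIntegrand, ← ofReal_one, ← ofReal_sub, ← ofReal_cpow (by linarith)]
  push_cast
  rfl

lemma re_one_div_cpow_mul_sum {t : ℝ} (ht : 0 < t) (q : ℕ) (σ : ℝ) :
    ((1 / t : ℂ) ^ (σ : ℂ) * ∑ i ∈ Finset.range (q + 1),
        q.choose i * log (1 / t) ^ i * iteratedDeriv (q - i) Gamma σ).re =
      t ^ (-σ) * (Real.Gamma σ * Real.log (1 / t) ^ q + ∑ j ∈ Finset.range q,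
        q.choose j * (iteratedDeriv (q - j) Gamma σ).re * Real.log (1 / t) ^ j) := by
  have hpow : (1 / t : ℂ) ^ (σ : ℂ) = ↑(t ^ (-σ)) := by
    rw [Real.rpow_neg ht.le, ← Real.inv_rpow ht.le, ofReal_cpow (by positivity)]
    push_cast
    ring_nf
  have hlog : log (1 / t : ℂ) = ↑(Real.log (1 / t)) := by
    rw [ofReal_log (by positivity)]
    push_cast
    rfl
  rw [hpow, hlog, re_ofReal_mul, Finset.sum_range_succ, add_re, re_sum, Nat.sub_self,
    iteratedDeriv_zero, Gamma_ofReal, Nat.choose_self, add_comm]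
  simp only [← ofReal_pow, ← ofReal_natCast, ← ofReal_mul, re_ofReal_mul, ofReal_re]
  exact congrArg _ (congrArg₂ _ (by ring) (Finset.sum_congr rfl fun j _ => by ring))

lemma ofReal_half_sub_intCast_mem_gammaPoles_compl (k : ℤ) :
    ((1 / 2 - k : ℝ) : ℂ) ∈ gammaPolesᶜ := mem_gammaPoles_compl.2 fun m h => by
  have := congrArg re h
  simp only [ofReal_re, neg_re, natCast_re] at this
  have h2 : 2 * (k - m) = 1 := by exact_mod_cast (show 2 * ((k : ℝ) - m) = 1 by linarith)
  omega

theorem laplace_integral_expansion_half_integer (k : ℤ) (p : ℕ) :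
    ∃ (a : ℕ → ℝ) (F : ℂ → ℂ), Differentiable ℂ F ∧ (∀ x : ℝ, (F x).im = 0) ∧
      ∀ t : ℝ, 0 < t →
        (∫ x in Set.Ioi (1 : ℝ), Real.exp (-t * x) * x ^ (-(k : ℝ) - 1/2) * Real.log x ^ p) =
          t ^ ((k : ℝ) - 1/2) *
            (Real.Gamma (1/2 - (k : ℝ)) * Real.log (1 / t) ^ p +
              ∑ j ∈ Finset.range p, a j * Real.log (1 / t) ^ j) +
          (F t).re := by
  have hs := ofReal_half_sub_intCast_mem_gammaPoles_compl k
  refine ⟨fun j => p.choose j * (iteratedDeriv (p - j) Gamma (1 / 2 - k : ℝ)).re,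
    fun z => -((-1) ^ p * p ! * expPoleSeries p z (1 / 2 - k : ℝ)),
    ((differentiable_expPoleSeries_left p hs).const_mul _).neg,
    fun x => ?_, fun t ht => ?_⟩
  · rw [show (-1 : ℂ) ^ p * p ! = ((-1 : ℝ) ^ p * p ! : ℝ) by push_cast; rfl, neg_im,
      im_ofReal_mul, expPoleSeries_ofReal_im, mul_zero, neg_zero]
  have h := congrArg re (laplaceTail_eq ht p hs)
  rw [laplaceTail_ofReal, ofReal_re, sub_re, re_one_div_cpow_mul_sum ht] at h
  rw [neg_re, ← sub_eq_add_neg, show -(k : ℝ) - 1 / 2 = 1 / 2 - k - 1 by ring,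
    show (k : ℝ) - 1 / 2 = -(1 / 2 - k) by ring]
  exact h
end

section
/- Let E be an n-dimensional real inner product space, let μ₁, …, μ_n be a basis of E, and let θ = Σ_{j=1}^n b_j μ_j with b_j ∈ ℝ. Suppose that ⟨η, θ⟩ ≠ 0 for every η ∈ E satisfying ⟨η, μ_j⟩ > 0 for all j. Then either b_j ≥ 0 for all j, or b_j ≤ 0 for all j. -/
/-!
If `b` had a positive and a negative coefficient, some vector `t` with positive entries would
satisfy `∑ b j * t j = 0`. Since the Gram matrix of a linearly independent family is invertible,
the values `⟪η, μ j⟫` can be prescribed to be `t j`; such an `η` lies in the cone and is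
orthogonal to `θ`.
-/

open scoped RealInnerProductSpace InnerProductSpace ComplexOrder

open Matrix in
theorem exists_inner_eq_of_linearIndependent {𝕜 E ι : Type*} [RCLike 𝕜] [NormedAddCommGroup E]
    [InnerProductSpace 𝕜 E] [Fintype ι] {μ : ι → E} (hμ : LinearIndependent 𝕜 μ) (t : ι → 𝕜) :
    ∃ η : E, ∀ i, ⟪μ i, η⟫_𝕜 = t i := by
  classical
  obtain ⟨c, hc⟩ := mulVec_surjective_iff_isUnit.2 (posDef_gram_of_linearIndependent hμ).isUnit t
  refine ⟨∑ j, c j • μ j, fun i => ?_⟩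
  simp only [← hc, inner_sum, inner_smul_right, mulVec, dotProduct, gram_apply, mul_comm]

theorem exists_pos_dotProduct_eq_zero {ι : Type*} [Fintype ι] {b : ι → ℝ} {j k : ι}
    (hj : 0 < b j) (hk : b k < 0) : ∃ t : ι → ℝ, (∀ i, 0 < t i) ∧ b ⬝ᵥ t = 0 := by
  classical
  set S := ∑ i, b i
  refine ⟨1 + Pi.single j (S⁻ / b j) + Pi.single k (S⁺ / -b k), fun i => ?_, ?_⟩
  · have hj' : (0 : ι → ℝ) ≤ Pi.single j (S⁻ / b j) :=
      Pi.single_nonneg.2 (div_nonneg (negPart_nonneg S) hj.le)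
    have hk' : (0 : ι → ℝ) ≤ Pi.single k (S⁺ / -b k) :=
      Pi.single_nonneg.2 (div_nonneg (posPart_nonneg S) (neg_nonneg.2 hk.le))
    exact add_pos_of_pos_of_nonneg (add_pos_of_pos_of_nonneg one_pos (hj' i)) (hk' i)
  · rw [dotProduct_add, dotProduct_add, dotProduct_single, dotProduct_single,
      mul_div_cancel₀ _ hj.ne', mul_div_assoc', div_neg, mul_div_cancel_left₀ _ hk.ne,
      dotProduct_one]
    linarith [posPart_sub_negPart S]

theorem same_sign_coefficients_general (E : Type*) [NormedAddCommGroup E]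
    [InnerProductSpace ℝ E]
    (n : ℕ)
    (μ : Fin n → E) (hli : LinearIndependent ℝ μ)
    (θ : E) (b : Fin n → ℝ) (hθ : θ = ∑ j, b j • μ j)
    (h : ∀ η : E, (∀ j, 0 < ⟪η, μ j⟫) → ⟪η, θ⟫ ≠ 0) :
    (∀ j, 0 ≤ b j) ∨ (∀ j, b j ≤ 0) := by
  by_contra hmixed
  obtain ⟨⟨k, hk⟩, ⟨j, hj⟩⟩ : (∃ k, b k < 0) ∧ ∃ j, 0 < b j := by
    push Not at hmixed
    exact hmixed
  obtain ⟨t, ht_pos, hbt⟩ := exists_pos_dotProduct_eq_zero hj hk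
  obtain ⟨η, hη⟩ := exists_inner_eq_of_linearIndependent hli t
  have hημ : ∀ i, ⟪η, μ i⟫ = t i := fun i => by rw [real_inner_comm, hη]
  refine h η (fun i => hημ i ▸ ht_pos i) ?_
  simpa only [hθ, inner_sum, real_inner_smul_right, hημ, dotProduct] using hbt

theorem same_sign_coefficients (E : Type*) [NormedAddCommGroup E]
    [InnerProductSpace ℝ E] [FiniteDimensional ℝ E]
    (n : ℕ) (hn : Module.finrank ℝ E = n)
    (μ : Fin n → E) (hli : LinearIndependent ℝ μ)
    (hsp : Submodule.span ℝ (Set.range μ) = ⊤)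
    (θ : E) (b : Fin n → ℝ) (hθ : θ = ∑ j, b j • μ j)
    (h : ∀ η : E, (∀ j, 0 < ⟪η, μ j⟫) → ⟪η, θ⟫ ≠ 0) :
    (∀ j, 0 ≤ b j) ∨ (∀ j, b j ≤ 0) :=
  same_sign_coefficients_general E n μ hli θ b hθ h
end

section
/- Let c ∈ ℂ, r > 0, and let U ⊆ ℂ be an open set containing the closed disc {z : |z − c| ≤ r}. Let f : ℂ → ℂ be analytic on U with f(z) ≠ 0 for every z on the circle |z − c| = r. Then the set Z of zeros of f in the open disc {z : |z − c| < r} is finite, and for every natural number m, (1/(2πi)) · ∮_{|z−c|=r} z^m · f'(z)/f(z) dz = Σ_{ζ ∈ Z} ord_ζ(f) · ζ^m, where ord_ζ(f) denotes the order of vanishing of f at ζ and the contour integral is taken counterclockwise over the circle |z − c| = r. -/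
/-!
Dividing out the zeros of `f` in the disc one at a time writes `f = (∏ (z - ζ) ^ ord ζ) * h` with
`h` analytic and zero-free on the closed disc. On the circle the logarithmic derivative then splits
as `∑ ord ζ / (z - ζ) + h' / h`; after multiplying by `z ^ m`, Cauchy's integral formula turns each
simple pole into `2πi ord ζ ζ ^ m`, and Cauchy's theorem kills `z ^ m h' / h`.
-/

open Filter Metric Topology Complex Real

section AnalyticFactorization

variable {𝕜 : Type*} [NontriviallyNormedField 𝕜] {U : Set 𝕜} {f : 𝕜 → 𝕜}

theorem AnalyticOnNhd.finite_inter_preimage_zero (hf : AnalyticOnNhd 𝕜 f U) (hU : IsCompact U)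
    (hUc : IsConnected U) {x : 𝕜} (hx : x ∈ U) (hfx : f x ≠ 0) : (U ∩ f ⁻¹' {0}).Finite := by
  simpa [Set.sdiff_eq] using
    hU.finite_sdiff_of_mem_codiscreteWithin (hf.preimage_zero_mem_codiscreteWithin hfx hx hUc)

theorem AnalyticOnNhd.exists_eventuallyEq_pow_mul (hf : AnalyticOnNhd 𝕜 f U)
    (hU : IsPreconnected U) {x ζ : 𝕜} (hx : x ∈ U) (hfx : f x ≠ 0) (hζ : ζ ∈ U) :
    ∃ n : ℕ, ∃ g : 𝕜 → 𝕜, AnalyticAt 𝕜 g ζ ∧ g ζ ≠ 0 ∧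
      ∀ᶠ z in 𝓝 ζ, f z = (z - ζ) ^ n * g z := by
  have hnz : ¬∀ᶠ z in 𝓝 ζ, f z = 0 := fun hzero =>
    hfx (hf.eqOn_zero_of_preconnected_of_eventuallyEq_zero hU hζ hzero hx)
  simpa only [smul_eq_mul] using (hf ζ hζ).exists_eventuallyEq_pow_smul_nonzero_iff.2 hnz

theorem AnalyticOnNhd.exists_eq_sub_pow_mul {g : 𝕜 → 𝕜} {ζ : 𝕜} {n : ℕ}
    (hf : AnalyticOnNhd 𝕜 f U) (hg : AnalyticAt 𝕜 g ζ)
    (hfg : ∀ᶠ z in 𝓝 ζ, f z = (z - ζ) ^ n * g z) :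
    ∃ h : 𝕜 → 𝕜, AnalyticOnNhd 𝕜 h U ∧ h =ᶠ[𝓝 ζ] g ∧ ∀ z, f z = (z - ζ) ^ n * h z := by
  classical
  set h := Function.update (fun z => f z / (z - ζ) ^ n) ζ (g ζ)
  have h_near : h =ᶠ[𝓝 ζ] g := by
    filter_upwards [hfg] with z hz
    rcases eq_or_ne z ζ with rfl | hne
    · simp [h]
    · simp [h, hne, hz, sub_ne_zero.2 hne]
  have h_off : ∀ z ≠ ζ, h =ᶠ[𝓝 z] fun w => f w / (w - ζ) ^ n := fun z hz =>
    (eventually_ne_nhds hz).mono fun w hw => Function.update_of_ne hw _ _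
  refine ⟨h, fun z hz => ?_, h_near, fun z => ?_⟩
  · rcases eq_or_ne z ζ with rfl | hne
    · exact hg.congr h_near.symm
    · exact ((hf z hz).fun_div (g := fun w => (w - ζ) ^ n) (by fun_prop)
        (pow_ne_zero _ (sub_ne_zero.2 hne))).congr (h_off z hne).symm
  · rcases eq_or_ne z ζ with rfl | hne
    · simpa [h] using hfg.self_of_nhds
    · rw [(h_off z hne).eq_of_nhds, mul_div_cancel₀ _ (pow_ne_zero _ (sub_ne_zero.2 hne))]

theorem AnalyticOnNhd.exists_eq_prod_sub_pow_mul (hf : AnalyticOnNhd 𝕜 f U) (Z : Finset 𝕜)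
    (n : 𝕜 → ℕ) (hZ : ∀ ζ ∈ Z, ∃ g : 𝕜 → 𝕜, AnalyticAt 𝕜 g ζ ∧ g ζ ≠ 0 ∧
      ∀ᶠ z in 𝓝 ζ, f z = (z - ζ) ^ n ζ * g z) :
    ∃ h : 𝕜 → 𝕜, AnalyticOnNhd 𝕜 h U ∧ (∀ ζ ∈ Z, h ζ ≠ 0) ∧
      ∀ z, f z = (∏ ζ ∈ Z, (z - ζ) ^ n ζ) * h z := by
  classical
  induction Z using Finset.induction_on generalizing f with
  | empty => exact ⟨f, hf, by simp, by simp⟩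
  | insert ζ₀ Z hζ₀ ih =>
    obtain ⟨g₀, hg₀, hg₀ζ₀, hfg₀⟩ := hZ ζ₀ (Finset.mem_insert_self _ _)
    obtain ⟨f₀, hf₀, hf₀g₀, hff₀⟩ := hf.exists_eq_sub_pow_mul hg₀ hfg₀
    have hZ₀ : ∀ ζ ∈ Z, ∃ g : 𝕜 → 𝕜, AnalyticAt 𝕜 g ζ ∧ g ζ ≠ 0 ∧
        ∀ᶠ z in 𝓝 ζ, f₀ z = (z - ζ) ^ n ζ * g z := by
      intro ζ hζ
      have hne : ζ - ζ₀ ≠ 0 := sub_ne_zero.2 (ne_of_mem_of_not_mem hζ hζ₀)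
      obtain ⟨g, hg, hgζ, hfg⟩ := hZ ζ (Finset.mem_insert_of_mem hζ)
      refine ⟨fun z => g z / (z - ζ₀) ^ n ζ₀, hg.fun_div (by fun_prop) (pow_ne_zero _ hne),
        div_ne_zero hgζ (pow_ne_zero _ hne), ?_⟩
      filter_upwards [hfg, (continuous_sub_right ζ₀).continuousAt.eventually_ne hne]
        with z hz hz₀
      rw [mul_div_assoc', eq_div_iff (pow_ne_zero _ hz₀), ← hz, hff₀, mul_comm]
    obtain ⟨h, hh, hhZ, hf₀h⟩ := ih hf₀ hZ₀
    refine ⟨h, hh, Finset.forall_mem_insert _ _ _ |>.2 ⟨?_, hhZ⟩, fun z => ?_⟩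
    · exact right_ne_zero_of_mul (hf₀h ζ₀ ▸ hf₀g₀.self_of_nhds ▸ hg₀ζ₀)
    · rw [hff₀, hf₀h, Finset.prod_insert hζ₀, mul_assoc]

theorem logDeriv_prod_sub_pow_mul {Z : Finset 𝕜} (n : 𝕜 → ℕ) {h : 𝕜 → 𝕜} {z : 𝕜} (hz : z ∉ Z)
    (hh : DifferentiableAt 𝕜 h z) (hhz : h z ≠ 0) :
    logDeriv (fun w => (∏ ζ ∈ Z, (w - ζ) ^ n ζ) * h w) z =
      ∑ ζ ∈ Z, n ζ / (z - ζ) + logDeriv h z := by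
  have hne : ∀ ζ ∈ Z, (z - ζ) ^ n ζ ≠ 0 := fun ζ hζ =>
    pow_ne_zero _ (sub_ne_zero.2 fun e => hz (e ▸ hζ))
  rw [logDeriv_mul z (Finset.prod_ne_zero_iff.2 hne) hhz (by fun_prop) hh,
    logDeriv_prod (f := fun ζ w => (w - ζ) ^ n ζ) hne (by fun_prop)]
  congr 1
  refine Finset.sum_congr rfl fun ζ _ => ?_
  rw [logDeriv_fun_pow (by fun_prop)]
  simp [logDeriv_apply, div_eq_mul_inv]

theorem AnalyticOnNhd.differentiableOn_pow_mul_logDeriv [CompleteSpace 𝕜] {h : 𝕜 → 𝕜}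
    (hh : AnalyticOnNhd 𝕜 h U) (hh0 : ∀ z ∈ U, h z ≠ 0) (m : ℕ) :
    DifferentiableOn 𝕜 (fun z => z ^ m * logDeriv h z) U := fun z hz =>
  ((differentiableAt_pow m).mul
    ((hh z hz).deriv.differentiableAt.div (hh z hz).differentiableAt (hh0 z hz)))
    |>.differentiableWithinAt

end AnalyticFactorization

theorem circleIntegral_pow_div_sub {c ζ : ℂ} {r : ℝ} (hζ : ζ ∈ ball c r) (m : ℕ) :
    (∮ z in C(c, r), z ^ m / (z - ζ)) = 2 * π * I * ζ ^ m :=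
  circleIntegral_div_sub_of_differentiable_on_off_countable Set.countable_empty hζ
    (continuous_pow m).continuousOn fun _ _ => differentiableAt_pow m

theorem circleIntegral_pow_mul_logDeriv_prod_sub_pow_mul {c : ℂ} {r : ℝ} (hr : 0 ≤ r)
    {Z : Finset ℂ} (hZ : ↑Z ⊆ ball c r) (n : ℂ → ℕ) {h : ℂ → ℂ}
    (hh : AnalyticOnNhd ℂ h (closedBall c r)) (hh0 : ∀ z ∈ closedBall c r, h z ≠ 0) (m : ℕ) :
    (∮ z in C(c, r), z ^ m * logDeriv (fun w => (∏ ζ ∈ Z, (w - ζ) ^ n ζ) * h w) z) =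
      2 * π * I * ∑ ζ ∈ Z, (n ζ : ℂ) * ζ ^ m := by
  have hne : ∀ ζ ∈ Z, ∀ z ∈ sphere c r, z - ζ ≠ 0 := fun ζ hζ z hz =>
    sub_ne_zero.2 fun e => (mem_ball.1 (hZ hζ)).ne (e ▸ mem_sphere.1 hz)
  have hsplit : Set.EqOn
      (fun z => z ^ m * logDeriv (fun w => (∏ ζ ∈ Z, (w - ζ) ^ n ζ) * h w) z)
      (fun z => ∑ ζ ∈ Z, (n ζ : ℂ) * (z ^ m / (z - ζ)) + z ^ m * logDeriv h z) (sphere c r) := by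
    intro z hz
    have hzZ : z ∉ Z := fun hzZ => hne z hzZ z hz (sub_self z)
    have hzK := sphere_subset_closedBall hz
    dsimp only
    rw [logDeriv_prod_sub_pow_mul n hzZ (hh z hzK).differentiableAt (hh0 z hzK), mul_add,
      Finset.mul_sum]
    congr 1
    exact Finset.sum_congr rfl fun ζ _ => by ring
  have hpoles : ∀ ζ ∈ Z, CircleIntegrable (fun z => (n ζ : ℂ) * (z ^ m / (z - ζ))) c r :=
    fun ζ hζ => ContinuousOn.circleIntegrable hr <| continuousOn_const.mul <|
      (continuous_pow m).continuousOn.div (by fun_prop) (hne ζ hζ)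
  have hreg := hh.differentiableOn_pow_mul_logDeriv hh0 m
  rw [circleIntegral.integral_congr hr hsplit,
    circleIntegral.integral_add (CircleIntegrable.fun_sum Z hpoles)
      ((hreg.continuousOn.mono sphere_subset_closedBall).circleIntegrable hr),
    circleIntegral.integral_fun_sum hpoles,
    (hreg.mono closure_ball_subset_closedBall).diffContOnCl.circleIntegral_eq_zero hr,
    add_zero, Finset.mul_sum]
  refine Finset.sum_congr rfl fun ζ hζ => ?_
  rw [circleIntegral.integral_const_mul, circleIntegral_pow_div_sub (hZ hζ)]
  ring

theorem weighted_argument_principle (c : ℂ) (r : ℝ) (hr : 0 < r)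
    (U : Set ℂ) (hU : IsOpen U) (hcr : closedBall c r ⊆ U)
    (f : ℂ → ℂ) (hf : DifferentiableOn ℂ f U)
    (hne : ∀ z ∈ sphere c r, f z ≠ 0) :
    ∃ (Z : Finset ℂ) (ord : ℂ → ℕ),
      (↑Z : Set ℂ) = {z | z ∈ ball c r ∧ f z = 0} ∧
      (∀ ζ ∈ Z, ∃ g : ℂ → ℂ, AnalyticAt ℂ g ζ ∧ g ζ ≠ 0 ∧
        ∀ᶠ z in nhds ζ, f z = (z - ζ) ^ ord ζ * g z) ∧
      ∀ m : ℕ,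
        (2 * (Real.pi : ℂ) * Complex.I)⁻¹ *
            (∮ z in C(c, r), z ^ m * deriv f z / f z) =
          ∑ ζ ∈ Z, (ord ζ : ℂ) * ζ ^ m := by
  have hfa : AnalyticOnNhd ℂ f (closedBall c r) := (hf.analyticOnNhd hU).mono hcr
  have hconn : IsConnected (closedBall c r) :=
    (convex_closedBall c r).isConnected (nonempty_closedBall.2 hr.le)
  have hcr_mem : c + r ∈ closedBall c r := sphere_subset_closedBall (by simp [hr.le])
  have hfcr : f (c + r) ≠ 0 := hne _ (by simp [hr.le])
  have hzeros : {z | z ∈ ball c r ∧ f z = 0}.Finite :=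
    (hfa.finite_inter_preimage_zero (isCompact_closedBall c r) hconn hcr_mem hfcr).subset
      fun z hz => ⟨ball_subset_closedBall hz.1, hz.2⟩
  set Z := hzeros.toFinset
  choose! ord hord using fun ζ (hζ : ζ ∈ Z) => hfa.exists_eventuallyEq_pow_mul
    hconn.isPreconnected hcr_mem hfcr (ball_subset_closedBall (hzeros.mem_toFinset.1 hζ).1)
  obtain ⟨h, hh, hhZ, hfh⟩ := hfa.exists_eq_prod_sub_pow_mul Z ord hord
  have hh0 : ∀ z ∈ closedBall c r, h z ≠ 0 := by
    intro z hz hhz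
    have hfz : f z = 0 := by rw [hfh, hhz, mul_zero]
    rcases (mem_closedBall.1 hz).lt_or_eq with hlt | heq
    · exact hhZ z (hzeros.mem_toFinset.2 ⟨mem_ball.2 hlt, hfz⟩) hhz
    · exact hne z (mem_sphere.2 heq) hfz
  refine ⟨Z, ord, hzeros.coe_toFinset, hord, fun m => ?_⟩
  have hlog : ∀ z, z ^ m * deriv f z / f z =
      z ^ m * logDeriv (fun w => (∏ ζ ∈ Z, (w - ζ) ^ ord ζ) * h w) z := fun z => by
    rw [mul_div_assoc, ← logDeriv_apply, ← funext hfh]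
  simp_rw [hlog]
  rw [circleIntegral_pow_mul_logDeriv_prod_sub_pow_mul hr.le
    (fun ζ hζ => (hzeros.mem_toFinset.1 hζ).1) ord hh hh0 m, inv_mul_cancel_left₀ two_pi_I_ne_zero]
end
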